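/- arXiv:1512.03293 — 4 statements merged into one kernel-verified Lean document; each statement's English description precedes it below -/
import Mathlib

section
/- Let Φ : M_n^sa → M_n^sa be a linear map. The following five conditions are equivalent: (i) Φ belongs to the topological interior of the cone P(ℂ^n) of positivity-preserving maps (interior taken in the real vector space of all linear maps M_n^sa → M_n^sa); (ii) Φ = (1−t)Ψ + tΩ for some t ∈ (0,1] and some positivity-preserving map Ψ, where Ω is the completely depolarizing map Ω(ρ) = (tr ρ) Id/n; (iii) the Hilbert–Schmidt adjoint Φ* belongs to the interior of P(ℂ^n); (iv) Φ(ρ) is positive definite for every ρ ∈ PSD(ℂ^n) with tr ρ = 1; (v) Φ(ρ) is positive definite for every nonzero ρ ∈ PSD(ℂ^n). -/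
open Matrix ComplexOrder

/-- The real vector space `M_n^sa` of Hermitian `n × n` complex matrices. -/
noncomputable abbrev Msa (n : ℕ) := selfAdjoint (Matrix (Fin n) (Fin n) ℂ)

/-- The cone `P(ℂⁿ)` of positivity-preserving linear maps on `M_n^sa`. -/
def posPreserving {n : ℕ} (Φ : Msa n →ₗ[ℝ] Msa n) : Prop :=
  ∀ ρ : Msa n, (ρ : Matrix (Fin n) (Fin n) ℂ).PosSemidef →
    ((Φ ρ : Matrix (Fin n) (Fin n) ℂ)).PosSemidef

/-- The standard topology on the (finite-dimensional) real vector space of linear maps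
`M_n^sa → M_n^sa`, realized as the topology of pointwise convergence. -/
noncomputable instance {n : ℕ} : TopologicalSpace (Msa n →ₗ[ℝ] Msa n) :=
  TopologicalSpace.induced (fun f => (f : Msa n → Msa n)) inferInstance

/-- The completely depolarizing map `Ω(ρ) = (tr ρ) · Id/n` (for Hermitian `ρ` the trace is
real, so we may use its real part). -/
noncomputable def depol (n : ℕ) : Msa n →ₗ[ℝ] Msa n where
  toFun ρ := (((ρ : Matrix (Fin n) (Fin n) ℂ).trace.re) / n) • 1
  map_add' ρ σ := by
    simp [AddSubgroup.coe_add, Matrix.trace_add, add_div, add_smul]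
  map_smul' r ρ := by
    simp only [selfAdjoint.val_smul, Matrix.trace_smul, Complex.smul_re, RingHom.id_apply]
    rw [smul_eq_mul, mul_div_assoc, mul_smul]

namespace TfaeAux
variable {n : ℕ}
variable {n : ℕ}

noncomputable abbrev Mat (n : ℕ) := Matrix (Fin n) (Fin n) ℂ

/-- The quadratic form `A ↦ xᴴ A x` as an ℝ-linear map in `A`. -/
noncomputable def quadL (x : Fin n → ℂ) : Mat n →ₗ[ℝ] ℂ where
  toFun A := ∑ i, ∑ j, (starRingEnd ℂ) (x i) * A i j * x j
  map_add' A B := by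
    simp [Matrix.add_apply, mul_add, add_mul, Finset.sum_add_distrib]
  map_smul' r A := by
    simp only [Matrix.smul_apply, Complex.real_smul, RingHom.id_apply, Finset.smul_sum]
    congr 1; ext i; congr 1; ext j; ring

lemma quadL_eq (x : Fin n → ℂ) (A : Mat n) : quadL x A = star x ⬝ᵥ A *ᵥ x := by
  simp only [quadL, LinearMap.coe_mk, AddHom.coe_mk, dotProduct, mulVec, Pi.star_apply,
    Complex.star_def, Finset.mul_sum]
  congr 1; ext i; congr 1; ext j; ring

lemma quadL_conj {A : Mat n} (hA : A.IsHermitian) (x : Fin n → ℂ) :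
    (starRingEnd ℂ) (quadL x A) = quadL x A := by
  simp only [quadL, LinearMap.coe_mk, AddHom.coe_mk, map_sum]
  rw [Finset.sum_comm]
  congr 1; ext i; congr 1; ext j
  have h1 : (starRingEnd ℂ) (A j i) = A i j := by
    have := congrFun (congrFun hA.eq i) j
    rw [Matrix.conjTranspose_apply, Complex.star_def] at this
    exact this
  rw [_root_.map_mul, _root_.map_mul, Complex.conj_conj, h1]; ring

lemma quadL_im {A : Mat n} (hA : A.IsHermitian) (x : Fin n → ℂ) :
    (quadL x A).im = 0 := by
  have := quadL_conj hA x
  have h2 := congrArg Complex.im this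
  simp only [Complex.conj_im] at h2
  linarith

lemma posSemidef_iff {A : Mat n} (hA : A.IsHermitian) :
    A.PosSemidef ↔ ∀ x, 0 ≤ (quadL x A).re := by
  constructor
  · intro h x
    have := h.dotProduct_mulVec_nonneg x
    rw [← quadL_eq] at this
    exact (Complex.le_def.mp this).1
  · intro h
    refine Matrix.PosSemidef.of_dotProduct_mulVec_nonneg hA fun x => ?_
    rw [← quadL_eq]
    exact Complex.le_def.mpr ⟨by simpa using h x, by simpa using (quadL_im hA x).symm⟩

lemma posDef_iff {A : Mat n} (hA : A.IsHermitian) :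
    A.PosDef ↔ ∀ x, x ≠ 0 → 0 < (quadL x A).re := by
  constructor
  · intro h x hx
    have := h.dotProduct_mulVec_pos hx
    rw [← quadL_eq] at this
    exact (Complex.lt_def.mp this).1
  · intro h
    refine Matrix.PosDef.of_dotProduct_mulVec_pos hA fun x hx => ?_
    rw [← quadL_eq]
    exact Complex.lt_def.mpr ⟨by simpa using h x hx, by simpa using (quadL_im hA x).symm⟩



lemma trace_re_eq {B : Mat n} : ((Bᴴ * B).trace).re = ∑ i, ∑ k, Complex.normSq (B k i) := by
  simp only [Matrix.trace, Matrix.diag_apply, Matrix.mul_apply, Matrix.conjTranspose_apply]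
  rw [Complex.re_sum]
  congr 1; ext i
  rw [Complex.re_sum]
  congr 1; ext k
  simp [Complex.star_def, Complex.normSq_eq_conj_mul_self, Complex.normSq_apply]

open scoped MatrixOrder Matrix.Norms.L2Operator in
lemma psd_eq_conjT_mul {A : Mat n} (hA : A.PosSemidef) : ∃ B : Mat n, A = Bᴴ * B := by
  obtain ⟨B, hB⟩ := CStarAlgebra.nonneg_iff_eq_star_mul_self.mp hA.nonneg
  exact ⟨B, hB⟩

lemma trace_re_nonneg {A : Mat n} (hA : A.PosSemidef) : 0 ≤ A.trace.re := by
  obtain ⟨B, rfl⟩ := psd_eq_conjT_mul hA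
  rw [trace_re_eq]
  exact Finset.sum_nonneg fun i _ => Finset.sum_nonneg fun k _ => Complex.normSq_nonneg _

private lemma col_le {B : Mat n} (i : Fin n) :
    ∑ k, Complex.normSq (B k i) ≤ ∑ i', ∑ k', Complex.normSq (B k' i') :=
  Finset.single_le_sum (f := fun i' => ∑ k', Complex.normSq (B k' i'))
    (fun i' _ => Finset.sum_nonneg fun k _ => Complex.normSq_nonneg _) (Finset.mem_univ i)

lemma trace_re_pos {A : Mat n} (hA : A.PosSemidef) (h0 : A ≠ 0) : 0 < A.trace.re := by
  obtain ⟨B, rfl⟩ := psd_eq_conjT_mul hA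
  rw [trace_re_eq]
  have hB : B ≠ 0 := by rintro rfl; simp at h0
  obtain ⟨k, i, hki⟩ : ∃ k i, B k i ≠ 0 := by
    by_contra h; push_neg at h
    exact hB (by ext k i; simpa using h k i)
  have h1 : 0 < Complex.normSq (B k i) := Complex.normSq_pos.mpr hki
  have h2 : Complex.normSq (B k i) ≤ ∑ k', Complex.normSq (B k' i) :=
    Finset.single_le_sum (f := fun k' => Complex.normSq (B k' i)) (fun k' _ => Complex.normSq_nonneg _) (Finset.mem_univ k)
  exact h1.trans_le (h2.trans (col_le i))

lemma trace_coe_re {A : Mat n} (hA : A.IsHermitian) : (A.trace.re : ℂ) = A.trace := by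
  have : star A.trace = A.trace := by
    rw [← Matrix.trace_conjTranspose, hA.eq]
  rw [Complex.star_def, Complex.conj_eq_iff_re] at this
  exact this

lemma entry_abs_le_trace {A : Mat n} (hA : A.PosSemidef) (i j : Fin n) :
    ‖A i j‖ ≤ A.trace.re := by
  obtain ⟨B, rfl⟩ := psd_eq_conjT_mul hA
  rw [trace_re_eq]
  calc ‖(Bᴴ * B) i j‖ ≤ ∑ k, ‖Bᴴ i k * B k j‖ := by
        rw [Matrix.mul_apply]; exact norm_sum_le _ _
    _ ≤ ∑ k, (Complex.normSq (B k i) + Complex.normSq (B k j)) / 2 := by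
        refine Finset.sum_le_sum fun k _ => ?_
        rw [norm_mul, Matrix.conjTranspose_apply, Complex.star_def, Complex.norm_conj]
        nlinarith [sq_nonneg (‖B k i‖ - ‖B k j‖),
          Complex.sq_norm (B k i), Complex.sq_norm (B k j),
          norm_nonneg (B k i), norm_nonneg (B k j)]
    _ = ((∑ k, Complex.normSq (B k i)) + (∑ k, Complex.normSq (B k j))) / 2 := by
        rw [← Finset.sum_add_distrib, Finset.sum_div]
    _ ≤ _ := by
        have := col_le (B := B) i
        have := col_le (B := B) j
        linarith



lemma quadL_eq_trace (x : Fin n → ℂ) (A : Mat n) :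
    quadL x A = (A * vecMulVec x (star x)).trace := by
  simp only [quadL, LinearMap.coe_mk, AddHom.coe_mk, Matrix.trace, Matrix.diag_apply,
    Matrix.mul_apply, Matrix.vecMulVec_apply, Pi.star_apply, Complex.star_def]
  congr 1; ext i; congr 1; ext j; ring

lemma vecMulVec_isHermitian (x : Fin n → ℂ) : (vecMulVec x (star x)).IsHermitian := by
  ext i j
  simp [Matrix.conjTranspose_apply, Matrix.vecMulVec_apply, Complex.star_def, mul_comm]

lemma vecMulVec_posSemidef (x : Fin n → ℂ) : (vecMulVec x (star x)).PosSemidef := by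
  refine Matrix.PosSemidef.of_dotProduct_mulVec_nonneg (vecMulVec_isHermitian x) fun y => ?_
  have : star y ⬝ᵥ (vecMulVec x (star x)) *ᵥ y
      = (starRingEnd ℂ) (star x ⬝ᵥ y) * (star x ⬝ᵥ y) := by
    simp only [dotProduct, mulVec, Matrix.vecMulVec_apply, Pi.star_apply, Complex.star_def,
      map_sum, Finset.mul_sum, Finset.sum_mul, _root_.map_mul, Complex.conj_conj]
    rw [Finset.sum_comm]
    congr 1; ext i; congr 1; ext j; ring
  rw [this, ← Complex.normSq_eq_conj_mul_self]
  exact_mod_cast Complex.normSq_nonneg _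

lemma vecMulVec_ne_zero {x : Fin n → ℂ} (hx : x ≠ 0) : vecMulVec x (star x) ≠ 0 := by
  obtain ⟨i, hi⟩ : ∃ i, x i ≠ 0 := by
    by_contra h; push_neg at h; exact hx (funext h)
  intro h
  have := congrFun (congrFun h i) i
  simp only [Matrix.vecMulVec_apply, Pi.star_apply, Complex.star_def, Matrix.zero_apply] at this
  rw [Complex.mul_conj, Complex.ofReal_eq_zero, Complex.normSq_eq_zero] at this
  exact hi this

/-- key duality positivity: `tr(AB) > 0` for `A` psd nonzero, `B` posdef. -/
lemma trace_mul_re_pos {A B : Mat n} (hA : A.PosSemidef) (hA0 : A ≠ 0) (hB : B.PosDef) :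
    0 < ((A * B).trace).re := by
  obtain ⟨C, rfl⟩ := psd_eq_conjT_mul hA
  have hC : C ≠ 0 := by rintro rfl; simp at hA0
  have key : (Cᴴ * C * B).trace = (C * B * Cᴴ).trace := by
    rw [Matrix.mul_assoc, Matrix.trace_mul_comm]
  rw [key]
  have diag_eq : ∀ i, (C * B * Cᴴ) i i = star (star (C i)) ⬝ᵥ B *ᵥ (star (C i)) := by
    intro i
    simp only [Matrix.mul_apply, Matrix.conjTranspose_apply, dotProduct, mulVec, Pi.star_apply,
      star_star, Finset.sum_mul, Finset.mul_sum]
    rw [Finset.sum_comm]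
    congr 1; ext j; congr 1; ext k
    ring
  rw [Matrix.trace, Complex.re_sum]
  have nonneg : ∀ i, 0 ≤ ((C * B * Cᴴ).diag i).re := by
    intro i
    rw [Matrix.diag_apply, diag_eq i]
    exact hB.posSemidef.re_dotProduct_nonneg _
  obtain ⟨i, hi⟩ : ∃ i, C i ≠ 0 := by
    by_contra h; push_neg at h; exact hC (by ext i j; simpa using congrFun (h i) j)
  have pos : 0 < ((C * B * Cᴴ).diag i).re := by
    rw [Matrix.diag_apply, diag_eq i]
    exact hB.re_dotProduct_pos (by simpa using star_ne_zero.mpr hi)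
  exact Finset.sum_pos' (fun j _ => nonneg j) ⟨i, Finset.mem_univ i, pos⟩


end TfaeAux

namespace TfaeAux
variable {n : ℕ}

lemma herm (ρ : Msa n) : (ρ : Mat n).IsHermitian := by
  simpa [Matrix.IsHermitian, ← Matrix.star_eq_conjTranspose] using ρ.2

/-- coercion as ℝ-linear map -/
noncomputable def msaVal (n : ℕ) : Msa n →ₗ[ℝ] Mat n where
  toFun ρ := ρ
  map_add' _ _ := rfl
  map_smul' _ _ := rfl

instance : ContinuousSMul ℝ (Msa n) :=
  Topology.IsInducing.continuousSMul (f := id) Topology.IsInducing.subtypeVal continuous_id rfl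

set_option synthInstance.maxHeartbeats 1000000 in
instance : FiniteDimensional ℝ (Msa n) :=
  FiniteDimensional.of_injective (msaVal n) Subtype.coe_injective

lemma msa_psd_iff (M : Msa n) :
    (M : Mat n).PosSemidef ↔ ∀ x, 0 ≤ (quadL x (M : Mat n)).re :=
  posSemidef_iff (herm M)

lemma msa_posDef_iff (M : Msa n) :
    (M : Mat n).PosDef ↔ ∀ x, x ≠ 0 → 0 < (quadL x (M : Mat n)).re :=
  posDef_iff (herm M)

lemma msa_smul_psd {r : ℝ} (hr : 0 ≤ r) {M : Msa n} (hM : (M : Mat n).PosSemidef) :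
    ((r • M : Msa n) : Mat n).PosSemidef := by
  rw [msa_psd_iff]
  intro x
  rw [selfAdjoint.val_smul, _root_.map_smul, Complex.smul_re]
  exact mul_nonneg hr ((msa_psd_iff M).mp hM x)

lemma msa_smul_posDef {r : ℝ} (hr : 0 < r) {M : Msa n} (hM : (M : Mat n).PosDef) :
    ((r • M : Msa n) : Mat n).PosDef := by
  rw [msa_posDef_iff]
  intro x hx
  rw [selfAdjoint.val_smul, _root_.map_smul, Complex.smul_re]
  exact mul_pos hr ((msa_posDef_iff M).mp hM x hx)

lemma continuous_entry (i j : Fin n) : Continuous fun A : Mat n => A i j :=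
  (continuous_apply j).comp (continuous_apply i)

lemma continuous_quad (x : Fin n → ℂ) : Continuous fun A : Mat n => quadL x A := by
  simp only [quadL, LinearMap.coe_mk, AddHom.coe_mk]
  exact continuous_finset_sum _ fun i _ => continuous_finset_sum _ fun j _ =>
    (continuous_const.mul (continuous_entry i j)).mul continuous_const

lemma continuous_trace : Continuous fun A : Mat n => A.trace :=
  continuous_finset_sum _ fun i _ => continuous_entry i i

end TfaeAux

namespace TfaeAux
variable {n : ℕ}

/-- The compact base of the psd cone: psd, trace one. -/
def SB (n : ℕ) : Set (Msa n) :=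
  {ρ | (ρ : Mat n).PosSemidef ∧ (ρ : Mat n).trace = 1}

/-- The "unit sphere" in `Fin n → ℂ`. -/
def Sph (n : ℕ) : Set (Fin n → ℂ) := {x | ∑ k, Complex.normSq (x k) = 1}

lemma continuous_normSq_sum : Continuous fun x : Fin n → ℂ => ∑ k, Complex.normSq (x k) :=
  continuous_finset_sum _ fun k _ => Complex.continuous_normSq.comp (continuous_apply k)

lemma sph_ne_zero {x : Fin n → ℂ} (hx : x ∈ Sph n) : x ≠ 0 := by
  rintro rfl
  simp [Sph] at hx

lemma isCompact_Sph : IsCompact (Sph n) := by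
  have hK : IsCompact (Set.pi Set.univ fun _ : Fin n => Metric.closedBall (0:ℂ) 1) :=
    isCompact_univ_pi fun _ => isCompact_closedBall _ _
  refine hK.of_isClosed_subset (isClosed_eq continuous_normSq_sum continuous_const) ?_
  intro x hx
  intro k _
  simp only [Metric.mem_closedBall, dist_zero_right]
  have h1 : Complex.normSq (x k) ≤ 1 := by
    rw [← hx]
    exact Finset.single_le_sum (f := fun k => Complex.normSq (x k))
      (fun _ _ => Complex.normSq_nonneg _) (Finset.mem_univ k)
  have : ‖x k‖ ^ 2 ≤ 1 := by rwa [Complex.sq_norm]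
  nlinarith [norm_nonneg (x k)]

lemma continuous_conjT : Continuous fun A : Mat n => Aᴴ :=
  continuous_pi fun i => continuous_pi fun j => (continuous_entry j i).star

lemma isCompact_SB (hn : 0 < n) : IsCompact (SB n) := by
  rw [Topology.IsEmbedding.subtypeVal.isCompact_iff]
  have himg : Subtype.val '' (SB n)
      = {A : Mat n | A.PosSemidef ∧ A.trace = 1} := by
    ext A
    constructor
    · rintro ⟨ρ, hρ, rfl⟩; exact hρ
    · rintro ⟨h1, h2⟩
      refine ⟨⟨A, ?_⟩, ⟨h1, h2⟩, rfl⟩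
      exact h1.1
  rw [himg]
  have hK : IsCompact (Set.pi Set.univ fun _ : Fin n =>
      Set.pi Set.univ fun _ : Fin n => Metric.closedBall (0:ℂ) 1) :=
    isCompact_univ_pi fun _ => isCompact_univ_pi fun _ => isCompact_closedBall _ _
  refine hK.of_isClosed_subset ?_ ?_
  · have heq : {A : Mat n | A.PosSemidef ∧ A.trace = 1}
        = ({A : Mat n | Aᴴ = A} ∩ (⋂ x : Fin n → ℂ, {A | 0 ≤ (quadL x A).re}))
          ∩ {A | A.trace = 1} := by
      ext A
      simp only [Set.mem_setOf_eq, Set.mem_inter_iff, Set.mem_iInter]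
      constructor
      · rintro ⟨h1, h2⟩
        exact ⟨⟨h1.1, fun x => (posSemidef_iff h1.1).mp h1 x⟩, h2⟩
      · rintro ⟨⟨h1, h2⟩, h3⟩
        exact ⟨(posSemidef_iff h1).mpr h2, h3⟩
    rw [heq]
    refine IsClosed.inter (IsClosed.inter ?_ ?_) ?_
    · exact isClosed_eq continuous_conjT continuous_id
    · exact isClosed_iInter fun x => isClosed_le continuous_const
        (Complex.continuous_re.comp (continuous_quad x))
    · exact isClosed_eq continuous_trace continuous_const
  · rintro A ⟨h1, h2⟩ i _ j _
    simp only [Metric.mem_closedBall, dist_zero_right]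
    have := entry_abs_le_trace h1 i j
    rw [h2] at this
    simpa using this

lemma one_msa_val : ((1 : Msa n) : Mat n) = 1 := rfl

lemma SB_nonempty (hn : 0 < n) : ((n:ℝ)⁻¹ • (1 : Msa n)) ∈ SB n := by
  constructor
  · exact msa_smul_psd (by positivity) (by rw [one_msa_val]; exact Matrix.PosSemidef.one)
  · rw [selfAdjoint.val_smul, one_msa_val, Matrix.trace_smul, Matrix.trace_one]
    have hn' : (n:ℂ) ≠ 0 := by exact_mod_cast hn.ne'
    simp [Complex.real_smul]
    field_simp

lemma quadL_one (x : Fin n → ℂ) :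
    quadL x (1 : Mat n) = ((∑ k, Complex.normSq (x k) : ℝ) : ℂ) := by
  simp only [quadL, LinearMap.coe_mk, AddHom.coe_mk, Matrix.one_apply]
  push_cast
  refine Finset.sum_congr rfl fun i _ => ?_
  rw [Finset.sum_eq_single i]
  · simp [Complex.normSq_eq_conj_mul_self]
  · intro j _ hj; simp [Ne.symm hj]
  · simp

lemma depol_val (ρ : Msa n) :
    ((depol n ρ : Msa n) : Mat n) = (((ρ : Mat n).trace.re) / n) • (1 : Mat n) := by
  show (((((ρ : Mat n).trace.re) / n) • (1 : Msa n) : Msa n) : Mat n) = _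
  rw [selfAdjoint.val_smul, one_msa_val]

end TfaeAux

namespace TfaeAux
variable {n : ℕ}

/-- strict positivity: psd nonzero matrices are mapped to posdef ones. -/
def strictPos (Φ : Msa n →ₗ[ℝ] Msa n) : Prop :=
  ∀ ρ : Msa n, (ρ : Mat n).PosSemidef → ρ ≠ 0 → ((Φ ρ : Mat n)).PosDef

lemma msa_val_ne_zero {ρ : Msa n} (h : ρ ≠ 0) : (ρ : Mat n) ≠ 0 := by
  simpa using h

lemma quadL_zero_vec (A : Mat n) : quadL (0 : Fin n → ℂ) A = 0 := by
  simp [quadL]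

lemma mem_SB_scale {ρ : Msa n} (hψ : (ρ : Mat n).PosSemidef) (h0 : ρ ≠ 0) :
    (((ρ : Mat n).trace.re)⁻¹ • ρ) ∈ SB n := by
  have hτ : 0 < (ρ : Mat n).trace.re := trace_re_pos hψ (msa_val_ne_zero h0)
  refine ⟨msa_smul_psd (by positivity) hψ, ?_⟩
  rw [selfAdjoint.val_smul, Matrix.trace_smul, ← trace_coe_re (herm ρ)]
  rw [Complex.real_smul]
  push_cast
  field_simp
  rw [Complex.ofReal_re]
  exact div_self (by exact_mod_cast hτ.ne')

lemma sph_scale {x : Fin n → ℂ} (hs : 0 < ∑ k, Complex.normSq (x k)) :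
    ((Real.sqrt (∑ k, Complex.normSq (x k)))⁻¹ • x) ∈ Sph n := by
  set s := ∑ k, Complex.normSq (x k)
  have hss : Real.sqrt s ≠ 0 := Real.sqrt_ne_zero'.mpr hs
  simp only [Sph, Set.mem_setOf_eq, Pi.smul_apply, Complex.real_smul, _root_.map_mul,
    Complex.normSq_ofReal]
  rw [← Finset.mul_sum]
  rw [← Real.sqrt_inv]
  rw [Real.mul_self_sqrt (by positivity)]
  field_simp
  rfl

lemma quadL_smul_vec (r : ℝ) (x : Fin n → ℂ) (A : Mat n) :
    quadL (r • x) A = (r^2 : ℝ) • quadL x A := by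
  simp only [quadL, LinearMap.coe_mk, AddHom.coe_mk, Pi.smul_apply, Complex.real_smul,
    _root_.map_mul, Complex.conj_ofReal, Complex.ofReal_pow, Finset.smul_sum, smul_eq_mul]
  congr 1; ext i; congr 1; ext j; ring

/-- uniform strict-positivity bound via compactness -/
lemma exists_lower (hn : 0 < n) (Φ : Msa n →ₗ[ℝ] Msa n) (hst : strictPos Φ) :
    ∃ c : ℝ, 0 < c ∧ ∀ (ρ : Msa n), (ρ : Mat n).PosSemidef → ∀ x : Fin n → ℂ,
      c * (ρ : Mat n).trace.re * (∑ k, Complex.normSq (x k))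
        ≤ (quadL x ((Φ ρ : Mat n))).re := by
  classical
  set f : Msa n × (Fin n → ℂ) → ℝ := fun p => (quadL p.2 ((Φ p.1 : Mat n))).re with hf
  have hcont : Continuous f := by
    apply Complex.continuous_re.comp
    simp only [quadL, LinearMap.coe_mk, AddHom.coe_mk]
    refine continuous_finset_sum _ fun i _ => continuous_finset_sum _ fun j _ => ?_
    have hx : ∀ k : Fin n, Continuous fun p : Msa n × (Fin n → ℂ) => p.2 k :=
      fun k => (continuous_apply k).comp continuous_snd
    have hA : Continuous fun p : Msa n × (Fin n → ℂ) => ((Φ p.1 : Mat n)) i j :=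
      (continuous_entry i j).comp (continuous_subtype_val.comp
        (Φ.continuous_of_finiteDimensional.comp continuous_fst))
    exact ((Complex.continuous_conj.comp (hx i)).mul hA).mul (hx j)
  have hK : IsCompact ((SB n) ×ˢ (Sph n)) := (isCompact_SB hn).prod isCompact_Sph
  have hx0 : (Pi.single (⟨0, hn⟩ : Fin n) (1:ℂ)) ∈ Sph n := by
    simp only [Sph, Set.mem_setOf_eq]
    rw [Finset.sum_eq_single (⟨0, hn⟩ : Fin n)]
    · simp
    · intro j _ hj; simp [Pi.single_apply, hj]
    · simp
  have hne : ((SB n) ×ˢ (Sph n)).Nonempty :=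
    ⟨((n:ℝ)⁻¹ • (1 : Msa n), Pi.single (⟨0, hn⟩ : Fin n) (1:ℂ)),
      Set.mem_prod.mpr ⟨SB_nonempty hn, hx0⟩⟩
  obtain ⟨p, hp, hmin⟩ := hK.exists_isMinOn hne hcont.continuousOn
  set c := f p with hc
  have hSB := (Set.mem_prod.mp hp).1
  have hSph := (Set.mem_prod.mp hp).2
  have hρ0 : p.1 ≠ 0 := by
    intro h
    have := hSB.2
    rw [h] at this
    simp at this
  have hcpos : 0 < c := by
    have hpd := hst p.1 hSB.1 hρ0
    exact (msa_posDef_iff _).mp hpd _ (sph_ne_zero hSph)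
  refine ⟨c, hcpos, ?_⟩
  intro ρ hψ x
  by_cases h0 : ρ = 0
  · subst h0
    simp only [map_zero]
    have : ((0 : Msa n) : Mat n) = 0 := rfl
    rw [this]
    simp [Matrix.trace_zero]
  set τ := (ρ : Mat n).trace.re with hτdef
  have hτ : 0 < τ := trace_re_pos hψ (msa_val_ne_zero h0)
  set s := ∑ k, Complex.normSq (x k) with hsdef
  rcases eq_or_lt_of_le (Finset.sum_nonneg fun k _ => Complex.normSq_nonneg (x k)) with hs | hs
  · have hx0' : x = 0 := by
      funext k
      have : Complex.normSq (x k) = 0 := by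
        refine le_antisymm ?_ (Complex.normSq_nonneg _)
        rw [hs]
        exact Finset.single_le_sum (f := fun k => Complex.normSq (x k))
          (fun _ _ => Complex.normSq_nonneg _) (Finset.mem_univ k)
      simpa using Complex.normSq_eq_zero.mp this
    subst hx0'
    rw [quadL_zero_vec]
    have hs0 : s = 0 := by simp [hsdef]
    rw [hs0, mul_zero]
    simp
  · set ρ' := τ⁻¹ • ρ with hρ'
    set x' := (Real.sqrt s)⁻¹ • x with hx'
    have hmem : (ρ', x') ∈ (SB n) ×ˢ (Sph n) :=
      Set.mem_prod.mpr ⟨mem_SB_scale hψ h0, sph_scale hs⟩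
    have hge : c ≤ f (ρ', x') := hmin hmem
    have hval : f (ρ', x') = ((Real.sqrt s)⁻¹^2 * τ⁻¹) * (quadL x ((Φ ρ : Mat n))).re := by
      simp only [hf]
      rw [hx', quadL_smul_vec]
      rw [hρ', LinearMap.map_smul, selfAdjoint.val_smul, LinearMap.map_smul]
      simp only [Complex.smul_re, smul_eq_mul]
      ring
    rw [hval] at hge
    have hsq : (Real.sqrt s)⁻¹^2 = s⁻¹ := by
      rw [inv_pow, Real.sq_sqrt hs.le]
    rw [hsq] at hge
    -- hge : c ≤ s⁻¹ * τ⁻¹ * Q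
    set Q := (quadL x ((Φ ρ : Mat n))).re
    have key : s⁻¹ * τ⁻¹ * Q * (τ * s) = Q := by
      rw [show s⁻¹ * τ⁻¹ * Q * (τ * s) = Q * ((s⁻¹ * s) * (τ⁻¹ * τ)) by ring,
        inv_mul_cancel₀ hs.ne', inv_mul_cancel₀ hτ.ne', mul_one, mul_one]
    nlinarith [mul_le_mul_of_nonneg_right hge (le_of_lt (mul_pos hτ hs))]

end TfaeAux

namespace TfaeAux
variable {n : ℕ}

lemma decomp_of_strict (hn : 0 < n) (Φ : Msa n →ₗ[ℝ] Msa n) (hst : strictPos Φ) :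
    ∃ t : ℝ, t ∈ Set.Ioc (0 : ℝ) 1 ∧
      ∃ Ψ : Msa n →ₗ[ℝ] Msa n, posPreserving Ψ ∧ Φ = (1 - t) • Ψ + t • depol n := by
  obtain ⟨c, hc, hbound⟩ := exists_lower hn Φ hst
  set t := min (1/2 : ℝ) (c * n) with ht
  have htpos : 0 < t := lt_min (by norm_num) (by positivity)
  have htle : t ≤ 1 := (min_le_left _ _).trans (by norm_num)
  have ht2 : t ≤ 1/2 := min_le_left _ _
  have h1t : (0:ℝ) < 1 - t := by linarith
  refine ⟨t, ⟨htpos, htle⟩, (1 - t)⁻¹ • (Φ - t • depol n), ?_, ?_⟩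
  · intro ρ hρ
    have hτ : 0 ≤ (ρ : Mat n).trace.re := trace_re_nonneg hρ
    rw [msa_psd_iff]
    intro x
    have hval : (((((1 - t)⁻¹ • (Φ - t • depol n)) ρ) : Msa n) : Mat n)
        = (1 - t)⁻¹ • (((Φ ρ : Msa n)) : Mat n) - ((1 - t)⁻¹ * t) • ((depol n ρ : Msa n) : Mat n) := by
      simp only [LinearMap.smul_apply, LinearMap.sub_apply, selfAdjoint.val_smul,
        AddSubgroupClass.coe_sub, smul_sub, smul_smul]
    rw [hval]
    rw [map_sub, LinearMap.map_smul, LinearMap.map_smul]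
    rw [depol_val, LinearMap.map_smul, quadL_one]
    simp only [Complex.sub_re, Complex.smul_re, smul_eq_mul, Complex.ofReal_re]
    set s := ∑ k, Complex.normSq (x k) with hsdef
    have hsnn : 0 ≤ s := Finset.sum_nonneg fun k _ => Complex.normSq_nonneg _
    have hQ := hbound ρ hρ x
    have htn : t / n ≤ c := by
      rw [div_le_iff₀ (by exact_mod_cast hn)]
      exact min_le_right _ _
    have key : t * ((ρ : Mat n).trace.re / n * s) ≤ c * (ρ : Mat n).trace.re * s := by
      have : t / n * ((ρ : Mat n).trace.re * s) ≤ c * ((ρ : Mat n).trace.re * s) :=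
        mul_le_mul_of_nonneg_right htn (by positivity)
      calc t * ((ρ : Mat n).trace.re / n * s) = t / n * ((ρ : Mat n).trace.re * s) := by ring
        _ ≤ c * ((ρ : Mat n).trace.re * s) := this
        _ = c * (ρ : Mat n).trace.re * s := by ring
    have : 0 ≤ (quadL x ((Φ ρ : Mat n))).re - t * ((ρ : Mat n).trace.re / n * s) := by
      nlinarith
    have h1ti : 0 ≤ (1 - t)⁻¹ := by positivity
    nlinarith
  · have hne : (1 - t) ≠ 0 := h1t.ne'
    rw [smul_smul, mul_inv_cancel₀ hne, one_smul, sub_add_cancel]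

end TfaeAux

namespace TfaeAux
variable {n : ℕ}

/-- entrywise ℓ¹ size of a matrix -/
noncomputable def qent (A : Mat n) : ℝ := ∑ i, ∑ j, ‖A i j‖

lemma qent_nonneg (A : Mat n) : 0 ≤ qent A :=
  Finset.sum_nonneg fun i _ => Finset.sum_nonneg fun j _ => norm_nonneg _

lemma continuous_qent : Continuous (qent (n := n)) :=
  continuous_finset_sum _ fun i _ => continuous_finset_sum _ fun j _ =>
    continuous_norm.comp (continuous_entry i j)

lemma abs_quadL_le (x : Fin n → ℂ) (A : Mat n) :
    |(quadL x A).re| ≤ qent A * ∑ k, Complex.normSq (x k) := by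
  set s := ∑ k, Complex.normSq (x k) with hsdef
  have hsnn : 0 ≤ s := Finset.sum_nonneg fun k _ => Complex.normSq_nonneg _
  have habs : ‖quadL x A‖ ≤ qent A * s := by
    refine le_trans (norm_sum_le Finset.univ
      (fun i => ∑ j, (starRingEnd ℂ) (x i) * A i j * x j)) ?_
    rw [qent, Finset.sum_mul]
    refine Finset.sum_le_sum fun i _ => ?_
    refine le_trans (norm_sum_le _ _) ?_
    rw [Finset.sum_mul]
    refine Finset.sum_le_sum fun j _ => ?_
    rw [norm_mul, norm_mul, Complex.norm_conj]
    have hxi : ‖x i‖ ^ 2 ≤ s := by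
      rw [Complex.sq_norm]
      exact Finset.single_le_sum (f := fun k => Complex.normSq (x k))
        (fun _ _ => Complex.normSq_nonneg _) (Finset.mem_univ i)
    have hxj : ‖x j‖ ^ 2 ≤ s := by
      rw [Complex.sq_norm]
      exact Finset.single_le_sum (f := fun k => Complex.normSq (x k))
        (fun _ _ => Complex.normSq_nonneg _) (Finset.mem_univ j)
    have h1 : ‖x i‖ * ‖x j‖ ≤ s := by
      nlinarith [norm_nonneg (x i), norm_nonneg (x j)]
    calc ‖x i‖ * ‖A i j‖ * ‖x j‖
        = ‖A i j‖ * (‖x i‖ * ‖x j‖) := by ring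
      _ ≤ ‖A i j‖ * s := by
          exact mul_le_mul_of_nonneg_left h1 (norm_nonneg _)
  exact le_trans (Complex.abs_re_le_norm _) habs

set_option maxHeartbeats 2000000 in
lemma interior_of_decomp (hn : 0 < n) (Φ : Msa n →ₗ[ℝ] Msa n)
    (hdec : ∃ t : ℝ, t ∈ Set.Ioc (0 : ℝ) 1 ∧
      ∃ Θ : Msa n →ₗ[ℝ] Msa n, posPreserving Θ ∧ Φ = (1 - t) • Θ + t • depol n) :
    Φ ∈ interior {Ψ : Msa n →ₗ[ℝ] Msa n | posPreserving Ψ} := by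
  classical
  obtain ⟨t, ⟨ht0, ht1⟩, Θ, hΘ, hΦeq⟩ := hdec
  set b := Module.finBasis ℝ (Msa n) with hb
  have hMj : ∀ j, ∃ Mj : ℝ, 0 ≤ Mj ∧ ∀ ρ ∈ SB n, |b.coord j ρ| ≤ Mj := by
    intro j
    have hcont : Continuous fun ρ : Msa n => |b.coord j ρ| :=
      continuous_abs.comp (b.coord j).continuous_of_finiteDimensional
    obtain ⟨ρj, _, hmax⟩ := (isCompact_SB hn).exists_isMaxOn ⟨_, SB_nonempty hn⟩
      hcont.continuousOn
    exact ⟨|b.coord j ρj|, abs_nonneg _, fun ρ hρ => hmax hρ⟩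
  choose M hM0 hMle using hMj
  have hcoeff : ∀ (ρ : Msa n), (ρ : Mat n).PosSemidef →
      ∀ j, |b.coord j ρ| ≤ M j * (ρ : Mat n).trace.re := by
    intro ρ hρ j
    by_cases h0 : ρ = 0
    · subst h0
      have h1 : b.coord j (0 : Msa n) = 0 := LinearMap.map_zero _
      have h2 : ((0 : Msa n) : Mat n) = 0 := rfl
      rw [h1, h2]
      simp
    · have hτ : 0 < (ρ : Mat n).trace.re := trace_re_pos hρ (msa_val_ne_zero h0)
      set τ := (ρ : Mat n).trace.re
      have hρ' : (τ⁻¹ • ρ) ∈ SB n := mem_SB_scale hρ h0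
      have hle := hMle j _ hρ'
      rw [LinearMap.map_smul, smul_eq_mul, abs_mul,
        abs_of_nonneg (by positivity : (0:ℝ) ≤ τ⁻¹)] at hle
      calc |b.coord j ρ| = τ * (τ⁻¹ * |b.coord j ρ|) := by field_simp
        _ ≤ τ * M j := mul_le_mul_of_nonneg_left hle hτ.le
        _ = M j * τ := by ring
  set Sm := ∑ j, M j with hSm
  have hSm0 : 0 ≤ Sm := Finset.sum_nonneg fun j _ => hM0 j
  have hnR : (0:ℝ) < n := by exact_mod_cast hn
  set δ := (t / n) / (Sm + 1) with hδ
  have hδpos : 0 < δ := by positivity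
  have hδSm : δ * Sm ≤ t / n := by
    rw [hδ, div_mul_eq_mul_div, div_le_iff₀ (by linarith)]
    have h1 : t / n * Sm ≤ t / n * (Sm + 1) := by
      refine mul_le_mul_of_nonneg_left (by linarith) (by positivity)
    linarith
  set U : _ → Set (Msa n) := fun j => {σ : Msa n | qent ((σ : Mat n) - (Φ (b j) : Mat n)) < δ}
    with hU
  have hUopen : ∀ j, IsOpen (U j) := by
    intro j
    have : Continuous fun σ : Msa n => qent ((σ : Mat n) - (Φ (b j) : Mat n)) :=
      continuous_qent.comp (continuous_subtype_val.sub continuous_const)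
    exact isOpen_lt this continuous_const
  set T : Set (Msa n → Msa n) := ⋂ j, (fun f => f (b j)) ⁻¹' (U j) with hT
  have hTopen : IsOpen T :=
    isOpen_iInter_of_finite fun j => (hUopen j).preimage (continuous_apply (b j))
  rw [mem_interior_iff_mem_nhds, mem_nhds_induced]
  refine ⟨T, hTopen.mem_nhds ?_, ?_⟩
  · simp only [hT, Set.mem_iInter, Set.mem_preimage, hU, Set.mem_setOf_eq]
    intro j
    simpa [qent] using hδpos
  · intro Ψ hΨ
    simp only [Set.mem_preimage, hT, Set.mem_iInter, Set.mem_preimage, hU,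
      Set.mem_setOf_eq] at hΨ
    intro ρ hρ
    rw [msa_psd_iff]
    intro x
    set s := ∑ k, Complex.normSq (x k) with hsdef
    have hsnn : 0 ≤ s := Finset.sum_nonneg fun k _ => Complex.normSq_nonneg _
    set τ := (ρ : Mat n).trace.re with hτdef
    have hτnn : 0 ≤ τ := trace_re_nonneg hρ
    set E := Ψ - Φ with hE
    have hsplit : ((Ψ ρ : Msa n) : Mat n) = ((Φ ρ : Msa n) : Mat n) + ((E ρ : Msa n) : Mat n) := by
      simp [hE, LinearMap.sub_apply]
    rw [hsplit, map_add, Complex.add_re]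
    have hΦpart : t * (τ / n * s) ≤ (quadL x ((Φ ρ : Msa n) : Mat n)).re := by
      have hvalΦ : ((Φ ρ : Msa n) : Mat n)
          = (1 - t) • ((Θ ρ : Msa n) : Mat n) + t • ((depol n ρ : Msa n) : Mat n) := by
        rw [hΦeq]
        simp [LinearMap.add_apply, LinearMap.smul_apply, selfAdjoint.val_smul]
      rw [hvalΦ, map_add, LinearMap.map_smul, LinearMap.map_smul, Complex.add_re,
        Complex.smul_re, Complex.smul_re, depol_val, LinearMap.map_smul, quadL_one,
        Complex.smul_re]
      have hΘnn : 0 ≤ (quadL x ((Θ ρ : Msa n) : Mat n)).re :=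
        (msa_psd_iff _).mp (hΘ ρ hρ) x
      have h1t : 0 ≤ 1 - t := by linarith
      simp only [Complex.ofReal_re, smul_eq_mul, ← hsdef, ← hτdef]
      nlinarith
    have hEpart : |(quadL x ((E ρ : Msa n) : Mat n)).re| ≤ t / n * (τ * s) := by
      have hrepr : E ρ = ∑ j, b.repr ρ j • E (b j) := by
        conv_lhs => rw [← b.sum_repr ρ]
        rw [map_sum]
        exact Finset.sum_congr rfl fun j _ => by rw [LinearMap.map_smul]
      have hval : ((E ρ : Msa n) : Mat n) = ∑ j, b.repr ρ j • ((E (b j) : Msa n) : Mat n) := by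
        show msaVal n (E ρ) = _
        rw [hrepr, map_sum]
        exact Finset.sum_congr rfl fun j _ => by rw [LinearMap.map_smul]; rfl
      rw [hval, map_sum, Complex.re_sum]
      refine le_trans (Finset.abs_sum_le_sum_abs _ _) ?_
      have hterm : ∀ j, |((quadL x) (b.repr ρ j • ((E (b j) : Msa n) : Mat n))).re|
          ≤ (M j * τ) * (δ * s) := by
        intro j
        rw [LinearMap.map_smul, Complex.smul_re, smul_eq_mul, abs_mul]
        have h1 : |b.repr ρ j| ≤ M j * τ := hcoeff ρ hρ j
        have h2 : |((quadL x) ((E (b j) : Msa n) : Mat n)).re| ≤ δ * s := by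
          refine le_trans (abs_quadL_le x _) ?_
          refine mul_le_mul_of_nonneg_right ?_ hsnn
          have : ((E (b j) : Msa n) : Mat n) = ((Ψ (b j) : Msa n) : Mat n) - ((Φ (b j) : Msa n) : Mat n) := by
            simp [hE, LinearMap.sub_apply]
          rw [this]
          exact (hΨ j).le
        calc |b.repr ρ j| * |((quadL x) ((E (b j) : Msa n) : Mat n)).re|
            ≤ (M j * τ) * |((quadL x) ((E (b j) : Msa n) : Mat n)).re| := by
              exact mul_le_mul_of_nonneg_right h1 (abs_nonneg _)
          _ ≤ (M j * τ) * (δ * s) := by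
              refine mul_le_mul_of_nonneg_left h2 ?_
              exact mul_nonneg (hM0 j) hτnn
      refine le_trans (Finset.sum_le_sum fun j _ => hterm j) ?_
      rw [← Finset.sum_mul]
      have : (∑ j, M j * τ) = Sm * τ := by rw [hSm, Finset.sum_mul]
      rw [this]
      calc Sm * τ * (δ * s) = (δ * Sm) * (τ * s) := by ring
        _ ≤ (t / n) * (τ * s) := by
            refine mul_le_mul_of_nonneg_right hδSm (by positivity)
    have habs := neg_abs_le ((quadL x ((E ρ : Msa n) : Mat n)).re)
    have hrw : t * (τ / n * s) = t / n * (τ * s) := by ring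
    linarith

end TfaeAux

namespace TfaeAux
variable {n : ℕ}

/-- `x xᴴ` as an element of `Msa n`. -/
noncomputable def xxs (x : Fin n → ℂ) : Msa n :=
  ⟨vecMulVec x (star x), by
    rw [selfAdjoint.mem_iff, Matrix.star_eq_conjTranspose]
    exact vecMulVec_isHermitian x⟩

lemma xxs_val (x : Fin n → ℂ) : ((xxs x : Msa n) : Mat n) = vecMulVec x (star x) := rfl

lemma xxs_ne_zero {x : Fin n → ℂ} (hx : x ≠ 0) : (xxs x : Msa n) ≠ 0 := by
  intro h
  have : ((xxs x : Msa n) : Mat n) = 0 := by rw [h]; rfl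
  rw [xxs_val] at this
  exact vecMulVec_ne_zero hx this

lemma quadL_vecMulVec_self (x : Fin n → ℂ) :
    quadL x (vecMulVec x (star x)) = ((∑ k, Complex.normSq (x k) : ℝ) : ℂ)^2 := by
  simp only [quadL, LinearMap.coe_mk, AddHom.coe_mk, Matrix.vecMulVec_apply, Pi.star_apply,
    Complex.star_def]
  have : ∀ i j : Fin n, (starRingEnd ℂ) (x i) * (x i * (starRingEnd ℂ) (x j)) * x j
      = ((starRingEnd ℂ) (x i) * x i) * ((starRingEnd ℂ) (x j) * x j) := fun i j => by ring
  simp_rw [this]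
  rw [← Finset.sum_mul_sum]
  have hsum : (∑ i, (starRingEnd ℂ) (x i) * x i) = ((∑ k, Complex.normSq (x k) : ℝ) : ℂ) := by
    push_cast
    exact Finset.sum_congr rfl fun i _ => by
      rw [Complex.normSq_eq_conj_mul_self]
  rw [hsum, sq]

lemma trace_sq_re {A : Mat n} (hA : A.IsHermitian) :
    ((A * A).trace).re = ∑ i, ∑ j, Complex.normSq (A i j) := by
  simp only [Matrix.trace, Matrix.diag_apply, Matrix.mul_apply]
  rw [Complex.re_sum]
  congr 1; ext i
  rw [Complex.re_sum]
  congr 1; ext j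
  have h1 : A j i = (starRingEnd ℂ) (A i j) := by
    have := congrFun (congrFun hA.eq j) i
    rw [Matrix.conjTranspose_apply, Complex.star_def] at this
    exact this.symm
  rw [h1, Complex.mul_conj]
  simp

lemma trace_sq_re_pos {σ : Msa n} (h0 : σ ≠ 0) :
    0 < (((σ : Mat n) * (σ : Mat n)).trace).re := by
  rw [trace_sq_re (herm σ)]
  have hv : (σ : Mat n) ≠ 0 := msa_val_ne_zero h0
  obtain ⟨i, j, hij⟩ : ∃ i j, (σ : Mat n) i j ≠ 0 := by
    by_contra h; push_neg at h
    exact hv (by ext i j; simpa using h i j)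
  have h1 : 0 < Complex.normSq ((σ : Mat n) i j) := Complex.normSq_pos.mpr hij
  have h2 : Complex.normSq ((σ : Mat n) i j) ≤ ∑ j', Complex.normSq ((σ : Mat n) i j') :=
    Finset.single_le_sum (f := fun j' => Complex.normSq ((σ : Mat n) i j'))
      (fun _ _ => Complex.normSq_nonneg _) (Finset.mem_univ j)
  have h3 : (∑ j', Complex.normSq ((σ : Mat n) i j'))
      ≤ ∑ i', ∑ j', Complex.normSq ((σ : Mat n) i' j') :=
    Finset.single_le_sum (f := fun i' => ∑ j', Complex.normSq ((σ : Mat n) i' j'))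
      (fun _ _ => Finset.sum_nonneg fun _ _ => Complex.normSq_nonneg _) (Finset.mem_univ i)
  linarith

/-- rank-one perturbation of the identity direction -/
noncomputable def pertK (ρ : Msa n) (x : Fin n → ℂ) : Msa n →ₗ[ℝ] Msa n where
  toFun σ := ((((σ : Mat n) * (ρ : Mat n)).trace).re) • xxs x
  map_add' σ σ' := by
    show ((((σ + σ' : Msa n) : Mat n)) * (ρ : Mat n)).trace.re • xxs x
      = (((σ : Mat n) * (ρ : Mat n)).trace.re • xxs x)
        + (((σ' : Mat n) * (ρ : Mat n)).trace.re • xxs x)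
    rw [show (((σ + σ' : Msa n) : Mat n)) = (σ : Mat n) + (σ' : Mat n) from rfl,
      Matrix.add_mul, Matrix.trace_add, Complex.add_re, add_smul]
  map_smul' r σ := by
    show ((((r • σ : Msa n) : Mat n)) * (ρ : Mat n)).trace.re • xxs x
      = r • ((((σ : Mat n) * (ρ : Mat n)).trace.re) • xxs x)
    rw [show (((r • σ : Msa n) : Mat n)) = r • (σ : Mat n) from rfl,
      Matrix.smul_mul, Matrix.trace_smul, Complex.smul_re, smul_eq_mul, mul_smul]

lemma strict_of_interior (Ψ : Msa n →ₗ[ℝ] Msa n)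
    (h : Ψ ∈ interior {Φ' : Msa n →ₗ[ℝ] Msa n | posPreserving Φ'}) : strictPos Ψ := by
  intro ρ hρ hρ0
  have hP : posPreserving Ψ := interior_subset h
  have hpsd : ((Ψ ρ : Msa n) : Mat n).PosSemidef := hP ρ hρ
  rw [msa_posDef_iff]
  intro x hx
  by_contra hle
  push_neg at hle
  have hq0 : (quadL x ((Ψ ρ : Msa n) : Mat n)).re = 0 :=
    le_antisymm hle ((msa_psd_iff _).mp hpsd x)
  set K := pertK ρ x with hK
  set Γ : ℝ → (Msa n →ₗ[ℝ] Msa n) := fun ε => Ψ - ε • K with hΓ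
  have hcont : Continuous Γ := by
    apply continuous_induced_rng.mpr
    apply continuous_pi
    intro σ
    simp only [Function.comp_apply]
    have heq : (fun ε => (Γ ε) σ) = fun ε => Ψ σ - ε • K σ := by
      funext ε
      simp [hΓ, LinearMap.sub_apply, LinearMap.smul_apply]
    rw [heq]
    exact continuous_const.sub (continuous_id.smul continuous_const)
  have h0mem : (0:ℝ) ∈ Γ ⁻¹' (interior {Φ' : Msa n →ₗ[ℝ] Msa n | posPreserving Φ'}) := by
    have h0 : Γ 0 = Ψ := by simp [hΓ]
    simp only [Set.mem_preimage, h0]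
    exact h
  have hopen : IsOpen (Γ ⁻¹' (interior {Φ' : Msa n →ₗ[ℝ] Msa n | posPreserving Φ'})) :=
    isOpen_interior.preimage hcont
  obtain ⟨r, hr, hball⟩ := Metric.isOpen_iff.mp hopen 0 h0mem
  have hmem : (r/2 : ℝ) ∈ Metric.ball (0:ℝ) r := by
    simp only [Metric.mem_ball, Real.dist_eq, sub_zero]
    rw [abs_of_pos (by linarith)]
    linarith
  have hPP : posPreserving (Γ (r/2)) := interior_subset (hball hmem)
  have hpsd2 := (msa_psd_iff _).mp (hPP ρ hρ) x
  have hval : ((Γ (r/2) ρ : Msa n) : Mat n)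
      = ((Ψ ρ : Msa n) : Mat n)
        - ((r/2) * (((ρ : Mat n) * (ρ : Mat n)).trace).re) • vecMulVec x (star x) := by
    simp only [hΓ, LinearMap.sub_apply, LinearMap.smul_apply, AddSubgroupClass.coe_sub,
      selfAdjoint.val_smul, hK]
    congr 1
    show ((r/2) • (((((ρ : Mat n) * (ρ : Mat n)).trace).re) • xxs x) : Msa n).val = _
    rw [smul_smul, selfAdjoint.val_smul, xxs_val]
  rw [hval, map_sub, LinearMap.map_smul, Complex.sub_re, Complex.smul_re, hq0,
    quadL_vecMulVec_self] at hpsd2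
  set s := ∑ k, Complex.normSq (x k) with hsdef
  have hs0 : 0 ≤ s := Finset.sum_nonneg fun k _ => Complex.normSq_nonneg _
  have hsne : s ≠ 0 := by
    intro he
    apply hx
    funext k
    have hk : Complex.normSq (x k) = 0 := by
      refine le_antisymm ?_ (Complex.normSq_nonneg _)
      calc Complex.normSq (x k) ≤ s := by
            rw [hsdef]
            exact Finset.single_le_sum (f := fun k => Complex.normSq (x k))
              (fun _ _ => Complex.normSq_nonneg _) (Finset.mem_univ k)
        _ = 0 := he
    simpa using Complex.normSq_eq_zero.mp hk
  have hs : 0 < s := lt_of_le_of_ne hs0 (Ne.symm hsne)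
  have ha : 0 < (((ρ : Mat n) * (ρ : Mat n)).trace).re := trace_sq_re_pos hρ0
  have hre : ((((s:ℝ):ℂ))^2).re = s^2 := by
    rw [← Complex.ofReal_pow]
    exact Complex.ofReal_re _
  rw [hre] at hpsd2
  simp only [smul_eq_mul, zero_sub] at hpsd2
  have hpos : 0 < r / 2 * ((((ρ : Mat n) * (ρ : Mat n)).trace).re) * s ^ 2 :=
    mul_pos (mul_pos (by linarith : (0:ℝ) < r/2) ha) (pow_pos hs 2)
  linarith
end TfaeAux

namespace TfaeAux
variable {n : ℕ}

lemma strict_dual (Φ Φs : Msa n →ₗ[ℝ] Msa n)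
    (hadj : ∀ ρ σ : Msa n, (((Φ ρ : Msa n) : Mat n) * (σ : Mat n)).trace
      = ((ρ : Mat n) * ((Φs σ : Msa n) : Mat n)).trace)
    (hst : strictPos Φ) : strictPos Φs := by
  intro σ hσ hσ0
  rw [msa_posDef_iff]
  intro x hx
  have hkey : quadL x ((Φs σ : Msa n) : Mat n)
      = ((σ : Mat n) * ((Φ (xxs x) : Msa n) : Mat n)).trace := by
    rw [quadL_eq_trace, Matrix.trace_mul_comm, ← xxs_val, ← hadj (xxs x) σ,
      Matrix.trace_mul_comm]
  rw [hkey]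
  exact trace_mul_re_pos hσ (msa_val_ne_zero hσ0)
    (hst (xxs x) (by rw [xxs_val]; exact vecMulVec_posSemidef x) (xxs_ne_zero hx))

end TfaeAux


open TfaeAux in
/-- Characterizations of the interior of the cone of positivity-preserving maps. -/
theorem interior_posPreserving_tfae {n : ℕ} (hn : 0 < n)
    (Φ Φs : Msa n →ₗ[ℝ] Msa n)
    (hadj : ∀ ρ σ : Msa n,
      (((Φ ρ : Matrix (Fin n) (Fin n) ℂ)) * (σ : Matrix (Fin n) (Fin n) ℂ)).trace
        = ((ρ : Matrix (Fin n) (Fin n) ℂ) * ((Φs σ : Matrix (Fin n) (Fin n) ℂ))).trace) :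
    List.TFAE
      [ Φ ∈ interior {Ψ : Msa n →ₗ[ℝ] Msa n | posPreserving Ψ},
        ∃ t : ℝ, t ∈ Set.Ioc (0 : ℝ) 1 ∧
          ∃ Ψ : Msa n →ₗ[ℝ] Msa n, posPreserving Ψ ∧ Φ = (1 - t) • Ψ + t • depol n,
        Φs ∈ interior {Ψ : Msa n →ₗ[ℝ] Msa n | posPreserving Ψ},
        ∀ ρ : Msa n, (ρ : Matrix (Fin n) (Fin n) ℂ).PosSemidef → (ρ : Matrix (Fin n) (Fin n) ℂ).trace = 1 →
          ((Φ ρ : Matrix (Fin n) (Fin n) ℂ)).PosDef,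
        ∀ ρ : Msa n, (ρ : Matrix (Fin n) (Fin n) ℂ).PosSemidef → ρ ≠ 0 →
          ((Φ ρ : Matrix (Fin n) (Fin n) ℂ)).PosDef ] := by
  have hadj' : ∀ ρ σ : Msa n, (((Φs ρ : Msa n) : Mat n) * (σ : Mat n)).trace
      = ((ρ : Mat n) * ((Φ σ : Msa n) : Mat n)).trace := by
    intro ρ σ
    rw [Matrix.trace_mul_comm, ← hadj σ ρ, Matrix.trace_mul_comm]
  tfae_have 1 → 5 := fun h => strict_of_interior Φ h
  tfae_have 5 → 2 := fun h => decomp_of_strict hn Φ h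
  tfae_have 2 → 1 := fun h => interior_of_decomp hn Φ h
  tfae_have 5 → 4 := by
    intro h ρ hρ htr
    refine h ρ hρ ?_
    intro h0
    rw [h0] at htr
    have hz : ((0 : Msa n) : Mat n) = 0 := rfl
    rw [hz] at htr
    simp at htr
  tfae_have 4 → 5 := by
    intro h ρ hρ h0
    have hτ : 0 < (ρ : Mat n).trace.re := trace_re_pos hρ (msa_val_ne_zero h0)
    set τ := (ρ : Mat n).trace.re with hτdef
    have hSB : (τ⁻¹ • ρ) ∈ SB n := mem_SB_scale hρ h0
    have hpd := h (τ⁻¹ • ρ) hSB.1 hSB.2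
    have hback : ρ = τ • (τ⁻¹ • ρ) := by
      rw [smul_smul, mul_inv_cancel₀ hτ.ne', one_smul]
    rw [hback, LinearMap.map_smul]
    exact msa_smul_posDef hτ hpd
  tfae_have 5 → 3 := fun h =>
    interior_of_decomp hn Φs (decomp_of_strict hn Φs (strict_dual Φ Φs hadj h))
  tfae_have 3 → 5 := fun h => strict_dual Φs Φ hadj' (strict_of_interior Φs h)
  tfae_finish
end

section
/- (S-lemma) Let F, G be n×n symmetric real matrices, and assume there exists x̄ ∈ ℝ^n with ⟨x̄, G x̄⟩ > 0. Then the following are equivalent: (i) for every x ∈ ℝ^n, ⟨x, G x⟩ ≥ 0 implies ⟨x, F x⟩ ≥ 0; (ii) there exists μ ≥ 0 such that F − μG is positive semidefinite. -/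
open Matrix

private lemma quad_expand {n : ℕ} (Q : Matrix (Fin n) (Fin n) ℝ) (x y : Fin n → ℝ) (c s : ℝ) :
    (c • x + s • y) ⬝ᵥ Q.mulVec (c • x + s • y) =
      c^2 * (x ⬝ᵥ Q.mulVec x) + c*s*(x ⬝ᵥ Q.mulVec y + y ⬝ᵥ Q.mulVec x)
        + s^2 * (y ⬝ᵥ Q.mulVec y) := by
  simp [Matrix.mulVec_add, Matrix.mulVec_smul, dotProduct_add, add_dotProduct,
    dotProduct_smul, smul_dotProduct, smul_eq_mul]
  ring

private lemma quad_smul {n : ℕ} (Q : Matrix (Fin n) (Fin n) ℝ) (x : Fin n → ℝ) (c : ℝ) :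
    (c • x) ⬝ᵥ Q.mulVec (c • x) = c^2 * (x ⬝ᵥ Q.mulVec x) := by
  simp [Matrix.mulVec_smul, dotProduct_smul, smul_dotProduct, smul_eq_mul]
  ring

/-- Dines' theorem (additive form): the joint range of two quadratic forms is
closed under addition. -/
private lemma dines_add {n : ℕ} (F G : Matrix (Fin n) (Fin n) ℝ) (x y : Fin n → ℝ) :
    ∃ v : Fin n → ℝ,
      v ⬝ᵥ F.mulVec v = x ⬝ᵥ F.mulVec x + y ⬝ᵥ F.mulVec y ∧
      v ⬝ᵥ G.mulVec v = x ⬝ᵥ G.mulVec x + y ⬝ᵥ G.mulVec y := by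
  set a1 := x ⬝ᵥ F.mulVec x with ha1
  set a2 := x ⬝ᵥ G.mulVec x with ha2
  set b1 := y ⬝ᵥ F.mulVec y with hb1
  set b2 := y ⬝ᵥ G.mulVec y with hb2
  set cF := x ⬝ᵥ F.mulVec y + y ⬝ᵥ F.mulVec x with hcF
  set cG := x ⬝ᵥ G.mulVec y + y ⬝ᵥ G.mulVec x with hcG
  by_cases hzero : a1 + b1 = 0 ∧ a2 + b2 = 0
  · exact ⟨0, by simp [hzero.1, hzero.2]⟩
  have hpos : 0 < (a1+b1)^2 + (a2+b2)^2 := by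
    rcases eq_or_ne (a1+b1) 0 with h | h
    · have h2 : a2 + b2 ≠ 0 := fun hh => hzero ⟨h, hh⟩
      have := sq_pos_of_ne_zero h2
      nlinarith [sq_nonneg (a1+b1)]
    · have := sq_pos_of_ne_zero h
      nlinarith [sq_nonneg (a2+b2)]
  set d : ℝ → ℝ := fun θ =>
    (Real.cos θ^2 * a1 + Real.cos θ * Real.sin θ * cF + Real.sin θ^2 * b1) * (a2+b2)
    - (Real.cos θ^2 * a2 + Real.cos θ * Real.sin θ * cG + Real.sin θ^2 * b2) * (a1+b1)
    with hd
  have hcont : Continuous d := by rw [hd]; fun_prop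
  have hd0 : d 0 = a1*b2 - a2*b1 := by simp [hd]; ring
  have hdpi : d (Real.pi/2) = -(a1*b2 - a2*b1) := by simp [hd]; ring
  have hneg : d (Real.pi/2) = - d 0 := by rw [hd0, hdpi]
  have hivt : ∃ θ, d θ = 0 := by
    have hple : (0:ℝ) ≤ Real.pi/2 := by positivity
    rcases le_total (d 0) 0 with h | h
    · have h0 : (0:ℝ) ∈ Set.Icc (d 0) (d (Real.pi/2)) := ⟨h, by rw [hneg]; linarith⟩
      obtain ⟨θ, _, hθ0⟩ := intermediate_value_Icc hple hcont.continuousOn h0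
      exact ⟨θ, hθ0⟩
    · have h0 : (0:ℝ) ∈ Set.Icc (d (Real.pi/2)) (d 0) := ⟨by rw [hneg]; linarith, h⟩
      obtain ⟨θ, _, hθ0⟩ := intermediate_value_Icc' hple hcont.continuousOn h0
      exact ⟨θ, hθ0⟩
  obtain ⟨θ, hθ0⟩ := hivt
  rw [hd] at hθ0
  simp only at hθ0
  set c := Real.cos θ with hc
  set s := Real.sin θ with hs
  have hpyth : s^2 + c^2 = 1 := Real.sin_sq_add_cos_sq θ
  set z := c • x + s • y with hz
  set w := (-s) • x + c • y with hw
  set A := c^2 * a1 + c*s*cF + s^2 * b1 with hA_def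
  set B := c^2 * a2 + c*s*cG + s^2 * b2 with hB_def
  have hzF : z ⬝ᵥ F.mulVec z = A := quad_expand F x y c s
  have hzG : z ⬝ᵥ G.mulVec z = B := quad_expand G x y c s
  have hwF : w ⬝ᵥ F.mulVec w = (a1 + b1) - A := by
    rw [hw, quad_expand, hA_def]
    linear_combination (a1 + b1) * hpyth
  have hwG : w ⬝ᵥ G.mulVec w = (a2 + b2) - B := by
    rw [hw, quad_expand, hB_def]
    linear_combination (a2 + b2) * hpyth
  have hθ0' : A * (a2+b2) - B * (a1+b1) = 0 := hθ0
  set lam := (A*(a1+b1) + B*(a2+b2)) / ((a1+b1)^2 + (a2+b2)^2) with hlam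
  have hA : A = lam * (a1+b1) := by
    rw [hlam, div_mul_eq_mul_div, eq_div_iff hpos.ne']
    linear_combination (a2+b2) * hθ0'
  have hB : B = lam * (a2+b2) := by
    rw [hlam, div_mul_eq_mul_div, eq_div_iff hpos.ne']
    linear_combination (-(a1+b1)) * hθ0'
  rcases le_or_gt 1 lam with hl | hl
  · have hlpos : 0 < lam := lt_of_lt_of_le one_pos hl
    refine ⟨Real.sqrt lam⁻¹ • z, ?_, ?_⟩
    · rw [quad_smul, Real.sq_sqrt (by positivity), hzF, hA,
        inv_mul_cancel_left₀ hlpos.ne']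
    · rw [quad_smul, Real.sq_sqrt (by positivity), hzG, hB,
        inv_mul_cancel_left₀ hlpos.ne']
  · have h1l : 0 < 1 - lam := by linarith
    refine ⟨Real.sqrt (1-lam)⁻¹ • w, ?_, ?_⟩
    · rw [quad_smul, Real.sq_sqrt (by positivity), hwF, hA]
      have he : (a1+b1) - lam*(a1+b1) = (1-lam) * (a1+b1) := by ring
      rw [he, inv_mul_cancel_left₀ h1l.ne']
    · rw [quad_smul, Real.sq_sqrt (by positivity), hwG, hB]
      have he : (a2+b2) - lam*(a2+b2) = (1-lam) * (a2+b2) := by ring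
      rw [he, inv_mul_cancel_left₀ h1l.ne']

/-- **The S-lemma.** For real symmetric `F, G` with `⟨xbar, G xbar⟩ > 0` for some `xbar`:
every `x` with `⟨x, G x⟩ ≥ 0` satisfies `⟨x, F x⟩ ≥ 0` iff `F - μ G` is positive
semidefinite for some `μ ≥ 0`. -/
theorem s_lemma {n : ℕ} (F G : Matrix (Fin n) (Fin n) ℝ)
    (hF : F.IsSymm) (hG : G.IsSymm)
    (hx : ∃ xbar : Fin n → ℝ, 0 < xbar ⬝ᵥ G.mulVec xbar) :
    (∀ x : Fin n → ℝ, 0 ≤ x ⬝ᵥ G.mulVec x → 0 ≤ x ⬝ᵥ F.mulVec x) ↔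
      ∃ μ : ℝ, 0 ≤ μ ∧ ∀ x : Fin n → ℝ, 0 ≤ x ⬝ᵥ (F - μ • G).mulVec x := by
  obtain ⟨xb, hxb⟩ := hx
  have hexp : ∀ (μ : ℝ) (v : Fin n → ℝ),
      v ⬝ᵥ (F - μ • G).mulVec v = v ⬝ᵥ F.mulVec v - μ * (v ⬝ᵥ G.mulVec v) := by
    intro μ v
    simp [Matrix.sub_mulVec, Matrix.smul_mulVec, dotProduct_sub,
      dotProduct_smul, smul_eq_mul]
  constructor
  · intro h
    set φ : (Fin n → ℝ) → ℝ × ℝ := fun x => (x ⬝ᵥ F.mulVec x, x ⬝ᵥ G.mulVec x) with hφ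
    set M : Set (ℝ × ℝ) := Set.range φ with hM
    have hcone : ∀ p ∈ M, ∀ t : ℝ, 0 ≤ t → t • p ∈ M := by
      rintro p ⟨v, rfl⟩ t ht
      refine ⟨Real.sqrt t • v, ?_⟩
      simp only [hφ, Prod.smul_mk, smul_eq_mul]
      rw [quad_smul, quad_smul, Real.sq_sqrt ht]
    have hadd : ∀ p ∈ M, ∀ q ∈ M, p + q ∈ M := by
      rintro p ⟨v, rfl⟩ q ⟨w, rfl⟩
      obtain ⟨u, hu1, hu2⟩ := dines_add F G v w
      refine ⟨u, ?_⟩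
      simp only [hφ, Prod.mk_add_mk, Prod.mk.injEq]
      exact ⟨hu1, hu2⟩
    have hconv : Convex ℝ M := by
      intro p hp q hq a b ha hb hab
      exact hadd _ (hcone p hp a ha) _ (hcone q hq b hb)
    set S : Set (ℝ × ℝ) := (Set.Iio (0:ℝ)) ×ˢ (Set.Ioi (0:ℝ)) with hS
    have hSopen : IsOpen S := isOpen_Iio.prod isOpen_Ioi
    have hSconv : Convex ℝ S := (convex_Iio 0).prod (convex_Ioi 0)
    have hdisj : Disjoint S M := by
      rw [Set.disjoint_left]
      intro p hpS hpM
      obtain ⟨v, rfl⟩ := hpM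
      simp only [hφ, hS, Set.mem_prod, Set.mem_Iio, Set.mem_Ioi] at hpS
      exact absurd (h v hpS.2.le) (not_le.2 hpS.1)
    obtain ⟨f, u, hfS, hfM⟩ := geometric_hahn_banach_open hSconv hSopen hconv hdisj
    set a := f (1, 0) with hadef
    set b := f (0, 1) with hbdef
    have hf : ∀ p : ℝ × ℝ, f p = p.1 * a + p.2 * b := by
      intro p
      have hp : p = p.1 • ((1:ℝ),(0:ℝ)) + p.2 • ((0:ℝ),(1:ℝ)) := by simp [Prod.ext_iff]
      conv_lhs => rw [hp]
      rw [map_add, _root_.map_smul, _root_.map_smul, smul_eq_mul, smul_eq_mul]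
    have hu0 : u ≤ 0 := by
      have h0 : (0:ℝ×ℝ) ∈ M := ⟨0, by simp [hφ, Prod.ext_iff]⟩
      simpa using hfM 0 h0
    have hSlt : ∀ p1 p2 : ℝ, p1 < 0 → 0 < p2 → p1 * a + p2 * b < u := by
      intro p1 p2 h1 h2
      have := hfS (p1, p2) ⟨h1, h2⟩
      rwa [hf (p1, p2)] at this
    have ha0 : 0 ≤ a := by
      by_contra hcn
      push_neg at hcn
      rcases lt_or_ge b 0 with hb | hb
      · have hba : 0 < a/(2*b) := div_pos_of_neg_of_neg hcn (by linarith)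
        have h1 := hSlt (-1) (a/(2*b)) (by norm_num) hba
        have hbne : b ≠ 0 := hb.ne
        have h2 : (a/(2*b))*b = a/2 := by
          field_simp
        linarith
      · have h1 := hSlt (-1) 1 (by norm_num) one_pos
        nlinarith
    have hb0 : b ≤ 0 := by
      by_contra hcn
      push_neg at hcn
      rcases lt_or_ge 0 a with ha' | ha'
      · have hba : 0 < b/(2*a) := div_pos hcn (by linarith)
        have h1 := hSlt (-(b/(2*a))) 1 (neg_lt_zero.2 hba) one_pos
        have hane : a ≠ 0 := ha'.ne'
        have h2 : (b/(2*a))*a = b/2 := by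
          field_simp
        nlinarith
      · have h1 := hSlt (-1) 1 (by norm_num) one_pos
        linarith
    have hMnn : ∀ v : Fin n → ℝ, 0 ≤ (v ⬝ᵥ F.mulVec v) * a + (v ⬝ᵥ G.mulVec v) * b := by
      intro v
      by_contra hcn
      push_neg at hcn
      set r := (v ⬝ᵥ F.mulVec v) * a + (v ⬝ᵥ G.mulVec v) * b with hr
      have hscale : ∀ t : ℝ, 0 ≤ t → u ≤ t * r := by
        intro t ht
        have hmem : (t • (φ v) : ℝ × ℝ) ∈ M := hcone _ ⟨v, rfl⟩ t ht
        have h1 := hfM _ hmem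
        rw [hf] at h1
        simp only [hφ, Prod.smul_mk, smul_eq_mul] at h1
        have heq : t * (v ⬝ᵥ F.mulVec v) * a + t * (v ⬝ᵥ G.mulVec v) * b = t * r := by
          rw [hr]; ring
        linarith
      have ht : 0 ≤ (u-1)/r := div_nonneg_iff.mpr (Or.inr ⟨by linarith, hcn.le⟩)
      have h2 := hscale _ ht
      rw [div_mul_cancel₀ _ hcn.ne] at h2
      linarith
    have hapos : 0 < a := by
      rcases ha0.lt_or_eq with h' | h'
      · exact h'
      · exfalso
        have hbge : 0 ≤ b := by
          have h1 := hMnn xb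
          rw [← h'] at h1
          nlinarith
        have hb00 : b = 0 := le_antisymm hb0 hbge
        have h2 := hSlt (-1) 1 (by norm_num) one_pos
        rw [← h', hb00] at h2
        simp at h2
        linarith
    refine ⟨-b/a, div_nonneg (neg_nonneg.2 hb0) hapos.le, ?_⟩
    intro v
    rw [hexp]
    have h1 := hMnn v
    have h2 : v ⬝ᵥ F.mulVec v - (-b/a) * (v ⬝ᵥ G.mulVec v)
        = ((v ⬝ᵥ F.mulVec v) * a + (v ⬝ᵥ G.mulVec v) * b) / a := by
      field_simp
      ring
    rw [h2]
    exact div_nonneg h1 hapos.le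
  · rintro ⟨μ, hμ, hpsd⟩ v hv
    have h1 := hpsd v
    rw [hexp] at h1
    nlinarith [mul_nonneg hμ hv]
end

section
/- Let C ⊆ ℝ^n be a nondegenerate closed convex cone (C spans ℝ^n and C ∩ (−C) = {0}), and let P(C) be the cone of linear maps Φ : ℝ^n → ℝ^n with Φ(C) ⊆ C. A rank-one linear map Φ : ℝ^n → ℝ^n generates an extreme ray of P(C) if and only if Φ = u v^T where u generates an extreme ray of C and v generates an extreme ray of the dual cone C* = {x ∈ ℝ^n : ⟨x, y⟩ ≥ 0 for all y ∈ C}. -/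
open Matrix

/-- `Φ` generates an extreme ray of the convex cone `K`: it is a nonzero element of `K` and
every `Ψ ∈ K` with `Φ - Ψ ∈ K` is a nonnegative multiple of `Φ`. -/
def GeneratesExtremeRay {E : Type*} [AddCommGroup E] [Module ℝ E] (K : Set E) (Φ : E) : Prop :=
  Φ ∈ K ∧ Φ ≠ 0 ∧ ∀ Ψ ∈ K, Φ - Ψ ∈ K → ∃ c : ℝ, 0 ≤ c ∧ Ψ = c • Φ

/-- The rank-one map `u vᵀ : x ↦ ⟨v, x⟩ u`. -/
def outerMap {m n : ℕ} (u : Fin n → ℝ) (v : Fin m → ℝ) : (Fin m → ℝ) →ₗ[ℝ] (Fin n → ℝ) where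
  toFun x := (v ⬝ᵥ x) • u
  map_add' x y := by simp [dotProduct_add, add_smul]
  map_smul' r x := by simp [dotProduct_smul, mul_smul]

lemma outerMap_apply {m n : ℕ} (u : Fin n → ℝ) (v : Fin m → ℝ) (x : Fin m → ℝ) :
    outerMap u v x = (v ⬝ᵥ x) • u := rfl

lemma outerMap_sub_left {n : ℕ} (u w v : Fin n → ℝ) :
    outerMap (u - w) v = outerMap u v - outerMap w v := by
  apply LinearMap.ext; intro x
  simp [outerMap_apply, smul_sub]

lemma outerMap_sub_right {n : ℕ} (u v w : Fin n → ℝ) :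
    outerMap u (v - w) = outerMap u v - outerMap u w := by
  apply LinearMap.ext; intro x
  simp [outerMap_apply, sub_dotProduct, sub_smul]

lemma outerMap_smul_right {n : ℕ} (u v : Fin n → ℝ) (c : ℝ) :
    outerMap u (c • v) = c • outerMap u v := by
  apply LinearMap.ext; intro x
  simp [outerMap_apply, smul_dotProduct, smul_smul]

lemma outerMap_neg_neg {n : ℕ} (u v : Fin n → ℝ) :
    outerMap (-u) (-v) = outerMap u v := by
  apply LinearMap.ext; intro x
  simp [outerMap_apply]

/-- The linear functional `x ↦ v ⬝ᵥ x`. -/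
def dotL {n : ℕ} (v : Fin n → ℝ) : (Fin n → ℝ) →ₗ[ℝ] ℝ where
  toFun x := v ⬝ᵥ x
  map_add' x y := dotProduct_add v x y
  map_smul' r x := by simp [dotProduct_smul]

/-- If every value of `Ψ` is a multiple of `u`, then `Ψ = outerMap u w` for some `w`. -/
lemma exists_outer {n : ℕ} (u : Fin n → ℝ) (Ψ : (Fin n → ℝ) →ₗ[ℝ] (Fin n → ℝ))
    (h : ∀ x, ∃ c : ℝ, Ψ x = c • u) : ∃ w, Ψ = outerMap u w := by
  choose c hc using h
  refine ⟨fun j => c (fun k => if j = k then 1 else 0), ?_⟩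
  apply LinearMap.ext; intro x
  rw [outerMap_apply, LinearMap.pi_apply_eq_sum_univ Ψ x]
  rw [dotProduct, Finset.sum_smul]
  refine Finset.sum_congr rfl fun j _ => ?_
  rw [hc, smul_smul, mul_comm]

lemma nonneg_of_smul_mem {n : ℕ} {C : Set (Fin n → ℝ)}
    (hcone : ∀ (r : ℝ), 0 ≤ r → ∀ x ∈ C, r • x ∈ C)
    (hpointed : C ∩ (-C) = {0})
    {u : Fin n → ℝ} (huC : u ∈ C) (hu : u ≠ 0) {t : ℝ} (ht : t • u ∈ C) : 0 ≤ t := by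
  by_contra h
  push_neg at h
  have h1 : (-t)⁻¹ • (t • u) ∈ C :=
    hcone _ (le_of_lt (inv_pos.mpr (neg_pos.mpr h))) _ ht
  rw [smul_smul, inv_neg, neg_mul, inv_mul_cancel₀ (ne_of_lt h), neg_smul, one_smul] at h1
  have h2 : u ∈ C ∩ (-C) := ⟨huC, Set.mem_neg.mpr h1⟩
  rw [hpointed] at h2
  exact hu h2

lemma rank_one_decomp {n : ℕ} (Φ : (Fin n → ℝ) →ₗ[ℝ] (Fin n → ℝ))
    (hrank : LinearMap.rank Φ = 1) :
    ∃ u v : Fin n → ℝ, u ≠ 0 ∧ v ≠ 0 ∧ Φ = outerMap u v := by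
  rw [LinearMap.rank, rank_eq_one_iff] at hrank
  obtain ⟨u₀, hu₀, hall⟩ := hrank
  have hmul : ∀ x, ∃ c : ℝ, Φ x = c • (u₀ : Fin n → ℝ) := by
    intro x
    obtain ⟨r, hr⟩ := hall ⟨Φ x, LinearMap.mem_range_self Φ x⟩
    exact ⟨r, by simpa using (congrArg Subtype.val hr).symm⟩
  obtain ⟨v, hv⟩ := exists_outer u₀ Φ hmul
  refine ⟨u₀, v, fun h => hu₀ (Subtype.coe_injective h), ?_, hv⟩
  intro hv0
  subst hv0
  obtain ⟨x, hx⟩ := u₀.2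
  have : Φ x = 0 := by rw [hv, outerMap_apply]; simp
  rw [hx] at this
  exact hu₀ (Subtype.coe_injective (by simpa using this))

/-- Main forward step under the normalization `0 < v ⬝ᵥ x₀` for some `x₀ ∈ C`. -/
lemma forward_aux {n : ℕ} (C : Set (Fin n → ℝ))
    (hcone : ∀ (r : ℝ), 0 ≤ r → ∀ x ∈ C, r • x ∈ C)
    (hpointed : C ∩ (-C) = {0})
    (u v : Fin n → ℝ) (hu : u ≠ 0) (hv : v ≠ 0)
    (hext : GeneratesExtremeRay
      {Ψ : (Fin n → ℝ) →ₗ[ℝ] (Fin n → ℝ) | ∀ x ∈ C, Ψ x ∈ C} (outerMap u v))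
    (x₀ : Fin n → ℝ) (hx₀ : x₀ ∈ C) (hpos : 0 < v ⬝ᵥ x₀) :
    GeneratesExtremeRay C u ∧
      GeneratesExtremeRay {x : Fin n → ℝ | ∀ y ∈ C, 0 ≤ x ⬝ᵥ y} v := by
  obtain ⟨hmem, _, hextr⟩ := hext
  have huC : u ∈ C := by
    have h1 : (v ⬝ᵥ x₀) • u ∈ C := hmem x₀ hx₀
    have h2 := hcone (v ⬝ᵥ x₀)⁻¹ (le_of_lt (inv_pos.mpr hpos)) _ h1
    rwa [smul_smul, inv_mul_cancel₀ (ne_of_gt hpos), one_smul] at h2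
  have hvdual : ∀ y ∈ C, 0 ≤ v ⬝ᵥ y := by
    intro y hy
    exact nonneg_of_smul_mem hcone hpointed huC hu (hmem y hy)
  constructor
  · refine ⟨huC, hu, ?_⟩
    intro w hw hsub
    have hΨ : outerMap w v ∈ {Ψ : (Fin n → ℝ) →ₗ[ℝ] (Fin n → ℝ) | ∀ x ∈ C, Ψ x ∈ C} := by
      intro x hx
      exact hcone _ (hvdual x hx) _ hw
    have hΨ' : outerMap u v - outerMap w v ∈
        {Ψ : (Fin n → ℝ) →ₗ[ℝ] (Fin n → ℝ) | ∀ x ∈ C, Ψ x ∈ C} := by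
      rw [← outerMap_sub_left]
      intro x hx
      exact hcone _ (hvdual x hx) _ hsub
    obtain ⟨c, hc0, hc⟩ := hextr _ hΨ hΨ'
    refine ⟨c, hc0, ?_⟩
    have heq := LinearMap.congr_fun hc x₀
    simp only [outerMap_apply, LinearMap.smul_apply] at heq
    have h3 : (v ⬝ᵥ x₀) • w = (v ⬝ᵥ x₀) • (c • u) := by
      rw [heq, smul_comm]
    have := smul_right_injective (Fin n → ℝ) (ne_of_gt hpos) h3
    rw [this]
  · refine ⟨hvdual, hv, ?_⟩
    intro w hw hsub
    have hΨ : outerMap u w ∈ {Ψ : (Fin n → ℝ) →ₗ[ℝ] (Fin n → ℝ) | ∀ x ∈ C, Ψ x ∈ C} := by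
      intro x hx
      exact hcone _ (hw x hx) _ huC
    have hΨ' : outerMap u v - outerMap u w ∈
        {Ψ : (Fin n → ℝ) →ₗ[ℝ] (Fin n → ℝ) | ∀ x ∈ C, Ψ x ∈ C} := by
      rw [← outerMap_sub_right]
      intro x hx
      exact hcone _ (hsub x hx) _ huC
    obtain ⟨c, hc0, hc⟩ := hextr _ hΨ hΨ'
    refine ⟨c, hc0, ?_⟩
    funext j
    have heq := LinearMap.congr_fun hc (fun k => if j = k then 1 else 0)
    simp only [outerMap_apply, LinearMap.smul_apply] at heq
    have h3 : (w ⬝ᵥ fun k => if j = k then 1 else 0) • u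
        = (c * (v ⬝ᵥ fun k => if j = k then 1 else 0)) • u := by
      rw [heq, smul_smul]
    have h4 := smul_left_injective ℝ hu h3
    have hwj : (w ⬝ᵥ fun k => if j = k then 1 else 0) = w j := by
      simp [dotProduct, Finset.sum_ite_eq]
    have hvj : (v ⬝ᵥ fun k => if j = k then 1 else 0) = v j := by
      simp [dotProduct, Finset.sum_ite_eq]
    rw [hwj, hvj] at h4
    simpa using h4

/-- Rank-one generators of extreme rays of the cone of `C`-preserving maps, for a
nondegenerate closed convex cone `C ⊆ ℝⁿ`: they are exactly the maps `u vᵀ` with `u`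
generating an extreme ray of `C` and `v` generating an extreme ray of the dual cone `C*`. -/
theorem rank_one_extreme_rays {n : ℕ} (C : Set (Fin n → ℝ))
    (hclosed : IsClosed C) (hconvex : Convex ℝ C)
    (hcone : ∀ (r : ℝ), 0 ≤ r → ∀ x ∈ C, r • x ∈ C)
    (hspan : Submodule.span ℝ C = ⊤)
    (hpointed : C ∩ (-C) = {0})
    (Φ : (Fin n → ℝ) →ₗ[ℝ] (Fin n → ℝ)) (hrank : LinearMap.rank Φ = 1) :
    GeneratesExtremeRay {Ψ : (Fin n → ℝ) →ₗ[ℝ] (Fin n → ℝ) | ∀ x ∈ C, Ψ x ∈ C} Φ ↔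
      ∃ u v : Fin n → ℝ, Φ = outerMap u v ∧
        GeneratesExtremeRay C u ∧
        GeneratesExtremeRay {x : Fin n → ℝ | ∀ y ∈ C, 0 ≤ x ⬝ᵥ y} v := by
  constructor
  · intro hext
    obtain ⟨u, v, hu, hv, hΦ⟩ := rank_one_decomp Φ hrank
    -- find a point of C where v does not vanish
    have hex : ∃ x₀ ∈ C, v ⬝ᵥ x₀ ≠ 0 := by
      by_contra h
      push_neg at h
      have hker : Submodule.span ℝ C ≤ LinearMap.ker (dotL v) := by
        rw [Submodule.span_le]
        intro x hx
        exact h x hx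
      rw [hspan] at hker
      have : v ⬝ᵥ v = 0 := hker (Submodule.mem_top (R := ℝ) (x := v))
      exact hv ((dotProduct_self_eq_zero).mp this)
    obtain ⟨x₀, hx₀, hvx₀⟩ := hex
    rcases lt_or_gt_of_ne hvx₀ with hneg | hpos
    · have h' : Φ = outerMap (-u) (-v) := by rw [hΦ, outerMap_neg_neg]
      have hpos' : 0 < (-v) ⬝ᵥ x₀ := by
        rw [neg_dotProduct]; linarith
      have := forward_aux C hcone hpointed (-u) (-v) (neg_ne_zero.mpr hu)
        (neg_ne_zero.mpr hv) (h' ▸ hext) x₀ hx₀ hpos'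
      exact ⟨-u, -v, h', this.1, this.2⟩
    · have := forward_aux C hcone hpointed u v hu hv (hΦ ▸ hext) x₀ hx₀ hpos
      exact ⟨u, v, hΦ, this.1, this.2⟩
  · rintro ⟨u, v, hΦ, ⟨huC, hu, huext⟩, ⟨hvdual, hv, hvext⟩⟩
    have hmem : Φ ∈ {Ψ : (Fin n → ℝ) →ₗ[ℝ] (Fin n → ℝ) | ∀ x ∈ C, Ψ x ∈ C} := by
      rw [hΦ]
      intro x hx
      exact hcone _ (hvdual x hx) _ huC
    have hΦ0 : Φ ≠ 0 := by
      intro h0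
      rw [h0] at hrank
      rw [LinearMap.rank_zero] at hrank
      exact zero_ne_one hrank
    refine ⟨hmem, hΦ0, ?_⟩
    intro Ψ hΨ hΨ'
    -- every value of Ψ on C is a nonneg multiple of u
    have hval : ∀ x ∈ C, ∃ c : ℝ, Ψ x = c • u := by
      intro x hx
      rcases eq_or_lt_of_le (hvdual x hx) with heq | hlt
      · -- v ⬝ᵥ x = 0, so Φ x = 0 and Ψ x = 0
        have h1 : Ψ x ∈ C := hΨ x hx
        have h2 : -(Ψ x) ∈ C := by
          have := hΨ' x hx
          rw [LinearMap.sub_apply, hΦ, outerMap_apply, ← heq, zero_smul, zero_sub] at this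
          exact this
        have : Ψ x ∈ C ∩ (-C) := ⟨h1, Set.mem_neg.mpr (by simpa using h2)⟩
        rw [hpointed] at this
        exact ⟨0, by rw [this]; simp⟩
      · set t := v ⬝ᵥ x with ht
        have h1 : t⁻¹ • Ψ x ∈ C := hcone _ (le_of_lt (inv_pos.mpr hlt)) _ (hΨ x hx)
        have h2 : u - t⁻¹ • Ψ x ∈ C := by
          have h3 := hcone t⁻¹ (le_of_lt (inv_pos.mpr hlt)) _ (hΨ' x hx)
          rw [LinearMap.sub_apply, hΦ, outerMap_apply, smul_sub, smul_smul,
            inv_mul_cancel₀ (ne_of_gt hlt), one_smul] at h3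
          exact h3
        obtain ⟨c, _, hc⟩ := huext _ h1 h2
        refine ⟨c * t, ?_⟩
        have : Ψ x = t • (t⁻¹ • Ψ x) := by
          rw [smul_smul, mul_inv_cancel₀ (ne_of_gt hlt), one_smul]
        rw [this, hc, smul_smul, mul_comm]
    -- hence Ψ maps everything into span {u}
    have hspan' : ∀ x, ∃ c : ℝ, Ψ x = c • u := by
      intro x
      have hsub : Submodule.span ℝ C ≤ (Submodule.span ℝ {u}).comap Ψ := by
        rw [Submodule.span_le]
        intro y hy
        obtain ⟨c, hc⟩ := hval y hy
        exact Submodule.mem_span_singleton.mpr ⟨c, hc.symm⟩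
      rw [hspan] at hsub
      have : Ψ x ∈ Submodule.span ℝ {u} := hsub (Submodule.mem_top (R := ℝ) (x := x))
      obtain ⟨c, hc⟩ := Submodule.mem_span_singleton.mp this
      exact ⟨c, hc.symm⟩
    obtain ⟨w, hw⟩ := exists_outer u Ψ hspan'
    -- w ∈ C* and v - w ∈ C*
    have hwdual : ∀ y ∈ C, 0 ≤ w ⬝ᵥ y := by
      intro y hy
      have : (w ⬝ᵥ y) • u ∈ C := by rw [← outerMap_apply, ← hw]; exact hΨ y hy
      exact nonneg_of_smul_mem hcone hpointed huC hu this
    have hvwdual : v - w ∈ {x : Fin n → ℝ | ∀ y ∈ C, 0 ≤ x ⬝ᵥ y} := by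
      intro y hy
      have hmem2 : ((v - w) ⬝ᵥ y) • u ∈ C := by
        rw [← outerMap_apply, outerMap_sub_right, ← hw, ← hΦ]
        exact hΨ' y hy
      exact nonneg_of_smul_mem hcone hpointed huC hu hmem2
    obtain ⟨c, hc0, hc⟩ := hvext w hwdual hvwdual
    exact ⟨c, hc0, by rw [hw, hc, outerMap_smul_right, ← hΦ]⟩
end

section
/- Let m ≥ 2, let J be the m×m diagonal matrix with diagonal entries (1, −1, …, −1), and let Φ : ℝ^m → ℝ^m be a linear map with Φ(L_m) ⊆ L_m. Then there exist a real number μ ≥ 0 and a positive semidefinite symmetric m×m matrix Q such that Φ^T J Φ = μ J + Q. Moreover, if the rank of Φ is at least 2, then necessarily μ > 0. -/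
open Matrix

/-- The Lorentz quadratic form `q(x) = x₀² - ∑_{k≠1} xₖ²` on `ℝ^m`. -/
def lorentzQ (m : ℕ) [NeZero m] (x : Fin m → ℝ) : ℝ :=
  x 0 ^ 2 - ∑ k ∈ Finset.univ.erase 0, x k ^ 2

/-- The Lorentz cone `L_m = {x : x₀ ≥ 0, q(x) ≥ 0}` in `ℝ^m`. -/
def lorentzCone (m : ℕ) [NeZero m] : Set (Fin m → ℝ) :=
  {x | 0 ≤ x 0 ∧ 0 ≤ lorentzQ m x}

/-- The polar bilinear form of `lorentzQ`. -/
def lorentzB (m : ℕ) [NeZero m] (u v : Fin m → ℝ) : ℝ :=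
  u 0 * v 0 - ∑ k ∈ Finset.univ.erase 0, u k * v k

lemma lorentzQ_neg (m : ℕ) [NeZero m] (x : Fin m → ℝ) :
    lorentzQ m (-x) = lorentzQ m x := by
  simp [lorentzQ, Pi.neg_apply, neg_sq]

lemma lorentzQ_expand (m : ℕ) [NeZero m] (u v : Fin m → ℝ) (t : ℝ) :
    lorentzQ m (u + t • v)
      = lorentzQ m u + 2 * lorentzB m u v * t + lorentzQ m v * t ^ 2 := by
  simp only [lorentzQ, lorentzB, Pi.add_apply, Pi.smul_apply, smul_eq_mul]
  have h1 : ∀ k : Fin m, (u k + t * v k) ^ 2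
      = u k ^ 2 + 2 * (u k * v k) * t + v k ^ 2 * t ^ 2 := by
    intro k; ring
  rw [Finset.sum_congr rfl fun k _ => h1 k]
  rw [Finset.sum_add_distrib, Finset.sum_add_distrib, ← Finset.sum_mul, ← Finset.sum_mul,
    ← Finset.mul_sum]
  ring

lemma dot_diag (m : ℕ) [NeZero m] (x : Fin m → ℝ) :
    x ⬝ᵥ (Matrix.diagonal (fun i => if i = 0 then (1 : ℝ) else -1)).mulVec x
      = lorentzQ m x := by
  unfold dotProduct
  have h : ∀ i, (Matrix.diagonal (fun i => if i = 0 then (1 : ℝ) else -1)).mulVec x i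
      = (if i = 0 then (1:ℝ) else -1) * x i := fun i => Matrix.mulVec_diagonal _ _ _
  simp_rw [h]
  rw [← Finset.add_sum_erase Finset.univ _ (Finset.mem_univ 0)]
  rw [lorentzQ]
  have h2 : ∀ k ∈ Finset.univ.erase (0 : Fin m),
      x k * ((if k = 0 then (1:ℝ) else -1) * x k) = -(x k ^ 2) := by
    intro k hk
    rw [if_neg (Finset.ne_of_mem_erase hk)]; ring
  rw [Finset.sum_congr rfl h2, Finset.sum_neg_distrib]
  simp; ring

lemma quad_key (a b c A B C : ℝ) (ha : a < 0) (hc : 0 < c)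
    (h : ∀ t : ℝ, c + b * t + a * t ^ 2 = 0 → 0 ≤ C + B * t + A * t ^ 2) :
    a * C ≤ c * A := by
  have ha' : a ≠ 0 := ne_of_lt ha
  have h4a : (4 : ℝ) * a ≠ 0 := by positivity
  have hDpos : (0:ℝ) < b ^ 2 - 4 * a * c := by nlinarith
  set s : ℝ := Real.sqrt (b ^ 2 - 4 * a * c) with hs
  have hs2 : s ^ 2 = b ^ 2 - 4 * a * c := Real.sq_sqrt hDpos.le
  have hspos : 0 < s := Real.sqrt_pos.mpr hDpos
  set r1 : ℝ := (-b + s) / (2 * a) with hr1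
  set r2 : ℝ := (-b - s) / (2 * a) with hr2
  have hu1 : 2 * a * r1 = -b + s := by rw [hr1]; field_simp
  have hu2 : 2 * a * r2 = -b - s := by rw [hr2]; field_simp
  have hroot1 : c + b * r1 + a * r1 ^ 2 = 0 := by
    have h0 : (4*a) * (c + b * r1 + a * r1 ^ 2) = (4*a) * 0 := by
      linear_combination (2*a*r1 + b + s) * hu1 + hs2
    exact mul_left_cancel₀ h4a h0
  have hroot2 : c + b * r2 + a * r2 ^ 2 = 0 := by
    have h0 : (4*a) * (c + b * r2 + a * r2 ^ 2) = (4*a) * 0 := by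
      linear_combination (2*a*r2 + b - s) * hu2 + hs2
    exact mul_left_cancel₀ h4a h0
  have hP1 := h r1 hroot1
  have hP2 := h r2 hroot2
  have hprod : a * (r1 * r2) = c := by
    have h0 : (4*a) * (a * (r1 * r2)) = (4*a) * c := by
      linear_combination (2*a*r2) * hu1 + (-b + s) * hu2 - hs2
    exact mul_left_cancel₀ h4a h0
  have hdiff : a * (r2 - r1) = -s := by linear_combination (1/2 : ℝ) * hu2 - (1/2 : ℝ) * hu1
  have hdpos : 0 < r2 - r1 := by nlinarith
  have hprodneg : r1 * r2 < 0 := by nlinarith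
  have hr1neg : r1 < 0 := by nlinarith
  have hr2pos : 0 < r2 := by nlinarith
  have hcomb : 0 ≤ r2 * (C + B * r1 + A * r1 ^ 2) - r1 * (C + B * r2 + A * r2 ^ 2) := by
    have h1 : 0 ≤ r2 * (C + B * r1 + A * r1 ^ 2) := mul_nonneg hr2pos.le hP1
    have h2 : r1 * (C + B * r2 + A * r2 ^ 2) ≤ 0 := mul_nonpos_of_nonpos_of_nonneg hr1neg.le hP2
    linarith
  have hcomb' : 0 ≤ (r2 - r1) * (C - (r1 * r2) * A) := by nlinarith [hcomb]
  have h3 : 0 ≤ C - r1 * r2 * A := by nlinarith [hcomb', hdpos]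
  have h4 : 0 ≤ (-a) * (C - r1 * r2 * A) := mul_nonneg (by linarith) h3
  have h5 : (-a) * (C - r1 * r2 * A) = -(a * C) + c * A := by
    linear_combination A * hprod
  rw [h5] at h4; linarith

/-- A vector with vanishing first coordinate and nonnegative Lorentz form is zero. -/
lemma lorentz_zero (m : ℕ) [NeZero m] (v : Fin m → ℝ) (h0 : v 0 = 0)
    (hq : 0 ≤ lorentzQ m v) : v = 0 := by
  have hsum : ∑ k ∈ Finset.univ.erase (0 : Fin m), v k ^ 2 ≤ 0 := by
    rw [lorentzQ, h0] at hq; nlinarith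
  have hzero : ∀ k ∈ Finset.univ.erase (0 : Fin m), v k ^ 2 = 0 := by
    rw [← Finset.sum_eq_zero_iff_of_nonneg (fun k _ => sq_nonneg (v k))]
    have : 0 ≤ ∑ k ∈ Finset.univ.erase (0 : Fin m), v k ^ 2 :=
      Finset.sum_nonneg fun k _ => sq_nonneg (v k)
    linarith
  funext i
  by_cases hi : i = 0
  · rw [hi]; exact h0
  · have := hzero i (Finset.mem_erase.mpr ⟨hi, Finset.mem_univ i⟩)
    have := pow_eq_zero_iff (n := 2) (by norm_num) |>.mp this
    simpa using this

lemma rank_le_one_of_range_nonneg (m : ℕ) [NeZero m] (Φ : Matrix (Fin m) (Fin m) ℝ)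
    (h : ∀ x : Fin m → ℝ, 0 ≤ lorentzQ m (Φ.mulVec x)) : Φ.rank ≤ 1 := by
  rw [Matrix.rank]
  set W := LinearMap.range Φ.mulVecLin with hW
  have hWq : ∀ v ∈ W, 0 ≤ lorentzQ m v := by
    rintro v ⟨x, rfl⟩
    simpa [Matrix.mulVecLin_apply] using h x
  by_cases hbot : W = ⊥
  · rw [hbot]
    simp
  · obtain ⟨w, hwW, hw0⟩ := Submodule.exists_mem_ne_zero_of_ne_bot hbot
    have hwfst : w 0 ≠ 0 := by
      intro hc
      exact hw0 (lorentz_zero m w hc (hWq w hwW))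
    have hle : W ≤ Submodule.span ℝ {w} := by
      intro v hv
      have hz : (w 0) • v - (v 0) • w ∈ W := Submodule.sub_mem W
        (Submodule.smul_mem W _ hv) (Submodule.smul_mem W _ hwW)
      have hzfst : ((w 0) • v - (v 0) • w) 0 = 0 := by
        simp [Pi.sub_apply, Pi.smul_apply, smul_eq_mul]; ring
      have hz0 : (w 0) • v - (v 0) • w = 0 :=
        lorentz_zero m _ hzfst (hWq _ hz)
      have hv' : v = (v 0 / w 0) • w := by
        have hsub : (w 0) • v = (v 0) • w := by
          rw [sub_eq_zero] at hz0; exact hz0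
        funext i
        have := congrFun hsub i
        simp only [Pi.smul_apply, smul_eq_mul] at this ⊢
        field_simp
        linarith [this]
      rw [hv']
      exact Submodule.smul_mem _ _ (Submodule.mem_span_singleton_self w)
    calc Module.finrank ℝ W ≤ Module.finrank ℝ (Submodule.span ℝ {w}) :=
          Submodule.finrank_mono hle
      _ = 1 := finrank_span_singleton hw0

/-- If the matrix `Φ` preserves the Lorentz cone, then `Φᵀ J Φ = μ J + Q` for some `μ ≥ 0`
and positive semidefinite symmetric `Q`, where `J = diag(1, -1, …, -1)`; moreover `μ > 0`
whenever `rank Φ ≥ 2`. -/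
theorem lorentz_preserving_S_lemma_decomposition (m : ℕ) [NeZero m] (hm : 2 ≤ m)
    (Φ : Matrix (Fin m) (Fin m) ℝ)
    (hΦ : ∀ x ∈ lorentzCone m, Φ.mulVec x ∈ lorentzCone m) :
    ∃ (μ : ℝ) (Q : Matrix (Fin m) (Fin m) ℝ), 0 ≤ μ ∧ Q.IsSymm ∧
      (∀ x : Fin m → ℝ, 0 ≤ x ⬝ᵥ Q.mulVec x) ∧
      Φᵀ * Matrix.diagonal (fun i => if i = 0 then (1 : ℝ) else -1) * Φ
        = μ • Matrix.diagonal (fun i => if i = 0 then (1 : ℝ) else -1) + Q ∧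
      (2 ≤ Φ.rank → 0 < μ) := by
  set J : Matrix (Fin m) (Fin m) ℝ :=
    Matrix.diagonal (fun i => if i = 0 then (1 : ℝ) else -1) with hJ
  set s : (Fin m → ℝ) → ℝ := fun x => lorentzQ m (Φ.mulVec x) with hsdef
  -- nonnegativity of s on the double cone
  have hs0 : ∀ z, 0 ≤ lorentzQ m z → 0 ≤ s z := by
    intro z hz
    by_cases hz0 : 0 ≤ z 0
    · exact (hΦ z ⟨hz0, hz⟩).2
    · have := (hΦ (-z) ⟨by simp [Pi.neg_apply]; linarith [not_le.mp hz0],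
        by rwa [lorentzQ_neg]⟩).2
      rwa [Matrix.mulVec_neg, lorentzQ_neg] at this
  -- the key two-point inequality
  have key : ∀ x y : Fin m → ℝ, lorentzQ m y < 0 → 0 < lorentzQ m x →
      lorentzQ m y * s x ≤ lorentzQ m x * s y := by
    intro x y hy hx
    apply quad_key (lorentzQ m y) (2 * lorentzB m x y) (lorentzQ m x)
      (s y) (2 * lorentzB m (Φ.mulVec x) (Φ.mulVec y)) (s x) hy hx
    intro t hroot
    have hq0 : lorentzQ m (x + t • y) = 0 := by
      rw [lorentzQ_expand]; linarith [hroot]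
    have := hs0 (x + t • y) (le_of_eq hq0.symm)
    rw [hsdef] at this ⊢
    simp only at this ⊢
    rw [Matrix.mulVec_add, Matrix.mulVec_smul, lorentzQ_expand] at this
    linarith [this]
  -- the two test vectors
  set e0 : Fin m → ℝ := fun i => if i = 0 then 1 else 0 with he0def
  have he0 : lorentzQ m e0 = 1 := by
    rw [lorentzQ]
    have : ∑ k ∈ Finset.univ.erase (0 : Fin m), e0 k ^ 2 = 0 := by
      apply Finset.sum_eq_zero
      intro k hk
      rw [he0def]
      simp [Finset.ne_of_mem_erase hk]
    rw [this, he0def]; simp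
  set i1 : Fin m := ⟨1, hm⟩ with hi1
  have hi10 : i1 ≠ 0 := by
    intro hc
    have := congrArg Fin.val hc
    simp [hi1] at this
  set e1 : Fin m → ℝ := fun i => if i = i1 then 1 else 0 with he1def
  have he1 : lorentzQ m e1 = -1 := by
    rw [lorentzQ]
    have h1 : e1 0 = 0 := by rw [he1def]; simp [Ne.symm hi10]
    have h2 : ∑ k ∈ Finset.univ.erase (0 : Fin m), e1 k ^ 2 = 1 := by
      have : ∀ k ∈ Finset.univ.erase (0 : Fin m), e1 k ^ 2 = if k = i1 then 1 else 0 := by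
        intro k _
        rw [he1def]
        by_cases hk : k = i1 <;> simp [hk]
      rw [Finset.sum_congr rfl this, Finset.sum_ite_eq']
      simp [Finset.mem_erase, hi10]
    rw [h1, h2]; norm_num
  -- the set of ratios
  set Aset : Set ℝ := {r | ∃ y, lorentzQ m y < 0 ∧ r = s y / lorentzQ m y} with hAset
  have hne : Aset.Nonempty := ⟨s e1 / lorentzQ m e1, e1, by rw [he1]; norm_num, rfl⟩
  have hbdd : BddAbove Aset := by
    refine ⟨s e0, ?_⟩
    rintro r ⟨y, hy, rfl⟩
    rw [div_le_iff_of_neg hy]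
    have := key e0 y hy (by rw [he0]; norm_num)
    rw [he0] at this; linarith
  set μ : ℝ := max 0 (sSup Aset) with hμdef
  have hμ0 : 0 ≤ μ := le_max_left _ _
  -- main pointwise inequality
  have main : ∀ x : Fin m → ℝ, μ * lorentzQ m x ≤ s x := by
    intro x
    rcases lt_trichotomy (lorentzQ m x) 0 with h | h | h
    · have h1 : s x / lorentzQ m x ∈ Aset := ⟨x, h, rfl⟩
      have h2 : s x / lorentzQ m x ≤ μ := le_trans (le_csSup hbdd h1) (le_max_right _ _)
      exact (div_le_iff_of_neg h).mp h2
    · rw [h, mul_zero]; exact hs0 x (le_of_eq h.symm)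
    · have h0 : 0 ≤ s x / lorentzQ m x := div_nonneg (hs0 x h.le) h.le
      have hsup : sSup Aset ≤ s x / lorentzQ m x := by
        apply csSup_le hne
        rintro r ⟨y, hy, rfl⟩
        rw [le_div_iff₀ h, div_mul_eq_mul_div, div_le_iff_of_neg hy]
        linarith [key x y hy h]
      have hμle : μ ≤ s x / lorentzQ m x := max_le h0 hsup
      calc μ * lorentzQ m x ≤ (s x / lorentzQ m x) * lorentzQ m x :=
            mul_le_mul_of_nonneg_right hμle h.le
        _ = s x := div_mul_cancel₀ _ (ne_of_gt h)
  refine ⟨μ, Φᵀ * J * Φ - μ • J, hμ0, ?_, ?_, ?_, ?_⟩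
  · -- symmetry
    unfold Matrix.IsSymm
    rw [Matrix.transpose_sub, Matrix.transpose_smul, Matrix.transpose_mul,
      Matrix.transpose_mul, Matrix.transpose_transpose, hJ, Matrix.diagonal_transpose,
      Matrix.mul_assoc]
  · -- positive semidefiniteness
    intro x
    have hform : x ⬝ᵥ (Φᵀ * J * Φ).mulVec x = s x := by
      rw [← Matrix.mulVec_mulVec, ← Matrix.mulVec_mulVec, dotProduct_mulVec,
        Matrix.vecMul_transpose]
      exact dot_diag m (Φ.mulVec x)
    have hJform : x ⬝ᵥ J.mulVec x = lorentzQ m x := dot_diag m x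
    rw [Matrix.sub_mulVec, dotProduct_sub, Matrix.smul_mulVec,
      dotProduct_smul, smul_eq_mul, hform, hJform]
    linarith [main x]
  · abel
  · intro hrank
    by_contra hcon
    push_neg at hcon
    have hμeq : μ = 0 := le_antisymm hcon hμ0
    have hall : ∀ x : Fin m → ℝ, 0 ≤ lorentzQ m (Φ.mulVec x) := by
      intro x
      have := main x
      rw [hμeq, zero_mul] at this
      exact this
    have := rank_le_one_of_range_nonneg m Φ hall
    omega
end
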